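/- arXiv:1510.04521 — 6 statements merged into one kernel-verified Lean document; each statement's English description precedes it below -/
import Mathlib

section
/- Let 𝒜 be a function clone and let B be a relational structure with polymorphism clone ℬ. Then: (i) 𝒜 is B-colorable if and only if there exists an h1 clone homomorphism from 𝒜 to ℬ; (ii) 𝒜 is strongly B-colorable if and only if there exists a strong h1 clone homomorphism from 𝒜 to ℬ. -/
/-! ### Relational structures, pp-formulas, pp-powers -/

/-- A relational structure with signature `σ` (arities given by `ar`) on domain `D`. -/
structure RelStruct (σ : Type) (ar : σ → ℕ) (D : Type) where
  rel : ∀ s : σ, (Fin (ar s) → D) → Prop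

section Rel

variable {σ : Type} {ar : σ → ℕ} {τ : Type} {br : τ → ℕ} {D E : Type}

/-- `h` is a homomorphism between two relational structures in the same signature. -/
def IsHomOf (SA : RelStruct σ ar D) (SB : RelStruct σ ar E) (h : D → E) : Prop :=
  ∀ s t, SA.rel s t → SB.rel s (fun i => h (t i))

/-- Homomorphic equivalence of relational structures in the same signature. -/
def HomEquiv (SA : RelStruct σ ar D) (SB : RelStruct σ ar E) : Prop :=
  (∃ h, IsHomOf SA SB h) ∧ (∃ h, IsHomOf SB SA h)

/-- An automorphism of a relational structure. -/
def IsAutomorphism (S : RelStruct σ ar D) (g : D ≃ D) : Prop :=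
  IsHomOf S S g ∧ IsHomOf S S g.symm

/-- ω-categoricity (for at most countable structures): for every `n` the componentwise
action of the automorphism group on `n`-tuples has finitely many orbits. -/
def OmegaCategorical (S : RelStruct σ ar D) : Prop :=
  ∀ n : ℕ, Set.Finite { O : Set (Fin n → D) | ∃ t : Fin n → D,
    O = { u | ∃ g : D ≃ D, IsAutomorphism S g ∧ (fun i => g (t i)) = u } }

/-- A model-complete core: automorphisms are dense in endomorphisms. -/
def ModelCompleteCore (S : RelStruct σ ar D) : Prop :=
  ∀ e : D → D, IsHomOf S S e → ∀ F : Set D, F.Finite →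
    ∃ g : D ≃ D, IsAutomorphism S g ∧ ∀ x ∈ F, g x = e x

/-- Primitive positive formulas over signature `(σ, ar)` with free variables of type `V`. -/
inductive PPFormula (σ : Type) (ar : σ → ℕ) : Type → Type 1 where
  | rel {V : Type} (s : σ) (t : Fin (ar s) → V) : PPFormula σ ar V
  | eq {V : Type} (x y : V) : PPFormula σ ar V
  | and {V : Type} (φ ψ : PPFormula σ ar V) : PPFormula σ ar V
  | ex {V : Type} (φ : PPFormula σ ar (Option V)) : PPFormula σ ar V

/-- Satisfaction of a pp-formula under an assignment of the free variables. -/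
def PPFormula.Sat (S : RelStruct σ ar D) : {V : Type} → PPFormula σ ar V → (V → D) → Prop
  | _, .rel s t, v => S.rel s (fun i => v (t i))
  | _, .eq x y, v => v x = v y
  | _, .and φ ψ, v => PPFormula.Sat S φ v ∧ PPFormula.Sat S ψ v
  | _, .ex φ, v => ∃ d : D, PPFormula.Sat S φ (fun o => Option.elim o d v)

/-- A relation (with coordinates indexed by `V`) is pp-definable in `S`. -/
def PpDefinable (S : RelStruct σ ar D) {V : Type} (R : (V → D) → Prop) : Prop :=
  ∃ φ : PPFormula σ ar V, ∀ v, R v ↔ PPFormula.Sat S φ v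

/-- `SB` is a pp-power of `SA`: `SB` is isomorphic to a structure with domain `D^n`
(`n ≥ 1`) whose relations, regarded as relations on `D` of `n`-fold arity,
are pp-definable in `SA`. -/
def IsPpPower (SA : RelStruct σ ar D) (SB : RelStruct τ br E) : Prop :=
  ∃ n : ℕ, 0 < n ∧ ∃ e : E ≃ (Fin n → D),
    ∀ s : τ, PpDefinable SA (fun v : Fin (br s) × Fin n → D =>
      SB.rel s (fun j => e.symm (fun i => v (j, i))))

/-- `SB` is homomorphically equivalent to a pp-power of `SA`. -/
def HomEqPpPower (SA : RelStruct σ ar D) (SB : RelStruct τ br E) : Prop :=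
  ∃ (C : Type) (SC : RelStruct τ br C), IsPpPower SA SC ∧ HomEquiv SB SC

end Rel

/-! ### Function clones (all operations have arity ≥ 1; arity index `n` means arity `n+1`) -/

/-- A set of finitary operations on `A`, where `C n` collects the `(n+1)`-ary members. -/
def OpSet (A : Type) := ∀ n : ℕ, Set ((Fin (n+1) → A) → A)

section Clone

variable {A B : Type}

/-- A function clone: contains all projections and is closed under composition. -/
structure IsClone (C : OpSet A) : Prop where
  proj : ∀ (n : ℕ) (i : Fin (n+1)), (fun t => t i) ∈ C n
  comp : ∀ (n m : ℕ) (f : (Fin (n+1) → A) → A) (g : Fin (n+1) → ((Fin (m+1) → A) → A)),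
    f ∈ C n → (∀ i, g i ∈ C m) → (fun t => f (fun i => g i t)) ∈ C m

/-- An arity-preserving assignment of operations on `B` to operations on `A`. -/
def CloneMap (A B : Type) := ∀ n : ℕ, ((Fin (n+1) → A) → A) → ((Fin (n+1) → B) → B)

/-- `ξ` maps the members of `CA` to members of `CB`. -/
def MapsCloneInto (CA : OpSet A) (CB : OpSet B) (ξ : CloneMap A B) : Prop :=
  ∀ n f, f ∈ CA n → ξ n f ∈ CB n

/-- `ξ` preserves identities of height 1: it preserves taking minors (compositions
with projections). -/
def PreservesH1 (CA : OpSet A) (ξ : CloneMap A B) : Prop :=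
  ∀ (n m : ℕ) (f : (Fin (n+1) → A) → A), f ∈ CA n → ∀ p : Fin (n+1) → Fin (m+1),
    ξ m (fun t => f (fun i => t (p i))) = fun t => ξ n f (fun i => t (p i))

/-- An h1 clone homomorphism from `CA` to `CB`. -/
def IsH1Hom (CA : OpSet A) (CB : OpSet B) (ξ : CloneMap A B) : Prop :=
  MapsCloneInto CA CB ξ ∧ PreservesH1 CA ξ

/-- `ξ` sends every projection to the same projection. -/
def PreservesProj (ξ : CloneMap A B) : Prop :=
  ∀ (n : ℕ) (i : Fin (n+1)), ξ n (fun t => t i) = fun t => t i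

/-- A strong h1 clone homomorphism: an h1 clone homomorphism preserving projections. -/
def IsStrongH1Hom (CA : OpSet A) (CB : OpSet B) (ξ : CloneMap A B) : Prop :=
  IsH1Hom CA CB ξ ∧ PreservesProj ξ

/-- A clone homomorphism: preserves projections and composition. -/
def IsCloneHom (CA : OpSet A) (CB : OpSet B) (ξ : CloneMap A B) : Prop :=
  MapsCloneInto CA CB ξ ∧ PreservesProj ξ ∧
    ∀ (n m : ℕ) (f : (Fin (n+1) → A) → A) (g : Fin (n+1) → ((Fin (m+1) → A) → A)),
      f ∈ CA n → (∀ i, g i ∈ CA m) →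
      ξ m (fun t => f (fun i => g i t)) = fun t => ξ n f (fun i => ξ m (g i) t)

/-- Uniform continuity of a map between function clones. -/
def UniformlyCont (CA : OpSet A) (ξ : CloneMap A B) : Prop :=
  ∀ Bf : Set B, Bf.Finite → ∃ Af : Set A, Af.Finite ∧
    ∀ (n : ℕ) (f g : (Fin (n+1) → A) → A), f ∈ CA n → g ∈ CA n →
      (∀ t : Fin (n+1) → A, (∀ i, t i ∈ Af) → f t = g t) →
      ∀ u : Fin (n+1) → B, (∀ i, u i ∈ Bf) → ξ n f u = ξ n g u

/-- Continuity of a map between function clones (pointwise convergence topology). -/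
def ContinuousCloneMap (CA : OpSet A) (ξ : CloneMap A B) : Prop :=
  ∀ (n : ℕ) (f : (Fin (n+1) → A) → A), f ∈ CA n → ∀ Bf : Set B, Bf.Finite →
    ∃ Af : Set A, Af.Finite ∧
      ∀ g, g ∈ CA n → (∀ t : Fin (n+1) → A, (∀ i, t i ∈ Af) → f t = g t) →
        ∀ u : Fin (n+1) → B, (∀ i, u i ∈ Bf) → ξ n f u = ξ n g u

/-- `CB ∈ E Tra 𝒜`: some reflection of `CA` is contained in `CB`. -/
def InETra (CA : OpSet A) (CB : OpSet B) : Prop :=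
  ∃ (h1 : B → A) (h2 : A → B), ∀ n f, f ∈ CA n →
    (fun t : Fin (n+1) → B => h2 (f (fun i => h1 (t i)))) ∈ CB n

/-- `CB ∈ E Tra Pfin 𝒜`: some reflection of a finite power of `CA` is contained in `CB`. -/
def InETraPfin (CA : OpSet A) (CB : OpSet B) : Prop :=
  ∃ (m : ℕ) (h1 : B → (Fin m → A)) (h2 : (Fin m → A) → B),
    ∀ n f, f ∈ CA n →
      (fun u : Fin (n+1) → B => h2 (fun j => f (fun i => h1 (u i) j))) ∈ CB n

/-- `CB ∈ E Tra P 𝒜`: some reflection of a power of `CA` is contained in `CB`. -/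
def InETraP (CA : OpSet A) (CB : OpSet B) : Prop :=
  ∃ (I : Type) (h1 : B → (I → A)) (h2 : (I → A) → B),
    ∀ n f, f ∈ CA n →
      (fun u : Fin (n+1) → B => h2 (fun j => f (fun i => h1 (u i) j))) ∈ CB n

/-- `CB ∈ E Ret Pfin 𝒜`. -/
def InERetPfin (CA : OpSet A) (CB : OpSet B) : Prop :=
  ∃ (m : ℕ) (h1 : B → (Fin m → A)) (h2 : (Fin m → A) → B),
    (∀ b, h2 (h1 b) = b) ∧
    ∀ n f, f ∈ CA n →
      (fun u : Fin (n+1) → B => h2 (fun j => f (fun i => h1 (u i) j))) ∈ CB n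

/-- `CB ∈ E Ret P 𝒜`. -/
def InERetP (CA : OpSet A) (CB : OpSet B) : Prop :=
  ∃ (I : Type) (h1 : B → (I → A)) (h2 : (I → A) → B),
    (∀ b, h2 (h1 b) = b) ∧
    ∀ n f, f ∈ CA n →
      (fun u : Fin (n+1) → B => h2 (fun j => f (fun i => h1 (u i) j))) ∈ CB n

/-- `CB ∈ E H S Pfin 𝒜`: `CB` contains the clone obtained from some finite power of `CA`
by restricting to an invariant subset and taking the quotient action along a surjection. -/
def InEHSPfin (CA : OpSet A) (CB : OpSet B) : Prop :=
  ∃ (m : ℕ) (S : Set (Fin m → A)) (h : (Fin m → A) → B),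
    (∀ (n : ℕ) (f : (Fin (n+1) → A) → A), f ∈ CA n →
      ∀ t : Fin (n+1) → (Fin m → A), (∀ i, t i ∈ S) → (fun j => f (fun i => t i j)) ∈ S) ∧
    (∀ b : B, ∃ x ∈ S, h x = b) ∧
    (∀ (n : ℕ) (f : (Fin (n+1) → A) → A), f ∈ CA n → ∃ f' ∈ CB n,
      ∀ t : Fin (n+1) → (Fin m → A), (∀ i, t i ∈ S) →
        h (fun j => f (fun i => t i j)) = f' (fun i => h (t i)))

end Clone

section Pol

variable {σ : Type} {ar : σ → ℕ} {D : Type}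

/-- The polymorphism clone of a relational structure. -/
def Pol (S : RelStruct σ ar D) : OpSet D :=
  fun n => { f | ∀ (s : σ) (ts : Fin (n+1) → (Fin (ar s) → D)),
    (∀ i, S.rel s (ts i)) → S.rel s (fun j => f (fun i => ts i j)) }

end Pol

/-! ### Colorings of clones by relational structures -/

section Coloring

variable {A : Type}

/-- `F_𝒜(J)`: the closure of the projections `π^J_b` inside `A^{A^J}` under the
componentwise action of the clone `CA`. -/
inductive FreeSet (CA : OpSet A) (J : Type) : ((J → A) → A) → Prop where
  | proj (b : J) : FreeSet CA J (fun x => x b)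
  | app {n : ℕ} (f : (Fin (n+1) → A) → A) (hf : f ∈ CA n)
      (g : Fin (n+1) → ((J → A) → A)) (hg : ∀ i, FreeSet CA J (g i)) :
      FreeSet CA J (fun x => f (fun i => g i x))

/-- `R^𝒜`: the closure of `{(π^J_{b1},…,π^J_{bk}) : (b1,…,bk) ∈ R}` under the
componentwise action of the clone `CA`. -/
inductive RelLift (CA : OpSet A) {J : Type} {k : ℕ} (R : (Fin k → J) → Prop) :
    (Fin k → ((J → A) → A)) → Prop where
  | base (b : Fin k → J) (hb : R b) : RelLift CA R (fun j => fun x => x (b j))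
  | app {n : ℕ} (f : (Fin (n+1) → A) → A) (hf : f ∈ CA n)
      (g : Fin (n+1) → (Fin k → ((J → A) → A))) (hg : ∀ i, RelLift CA R (g i)) :
      RelLift CA R (fun j => fun x => f (fun i => g i j x))

/-- A coloring of the clone `CA` by the relational structure `SB`:
a map `F_𝒜(B) → B` sending each lifted relation `R^𝒜` into `R`. -/
def IsColoring {τ : Type} {br : τ → ℕ} {E : Type} (CA : OpSet A) (SB : RelStruct τ br E)
    (c : {g : (E → A) → A // FreeSet CA E g} → E) : Prop :=
  ∀ (s : τ) (t : Fin (br s) → ((E → A) → A)), RelLift CA (SB.rel s) t →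
    ∀ hmem : ∀ j, FreeSet CA E (t j), SB.rel s (fun j => c ⟨t j, hmem j⟩)

/-- A strong coloring: a coloring with `c (π^B_b) = b` for all `b`. -/
def IsStrongColoring {τ : Type} {br : τ → ℕ} {E : Type} (CA : OpSet A)
    (SB : RelStruct τ br E) (c : {g : (E → A) → A // FreeSet CA E g} → E) : Prop :=
  IsColoring CA SB c ∧ ∀ b : E, c ⟨fun x => x b, FreeSet.proj b⟩ = b

end Coloring

/-!
A coloring `c` and an h1 clone homomorphism `ξ` determine each other through
`ξ f (b₁, …, bₙ) = c (x ↦ f (x b₁, …, x bₙ))`. Every element of `F_𝒜(B)` and every tuple of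
`R^𝒜` has such a normal form `x ↦ f (x b₁, …, x bₙ)`, where the `bᵢ` lie in `R` for `R^𝒜`,
because a clone can flatten a composition into a single operation. Two normal forms of the
same element of `F_𝒜(B)` are minors of a common operation, so preservation of minors makes
`c` well defined; being a coloring then translates exactly into `ξ f` preserving the
relations of `B`.
-/

open Function

section Normalization

variable {A E : Type} {CA : OpSet A}

theorem IsClone.minor_mem (hCA : IsClone CA) {n m : ℕ} {f : (Fin (n+1) → A) → A}
    (hf : f ∈ CA n) (p : Fin (n+1) → Fin (m+1)) :
    (fun u : Fin (m+1) → A => f (fun i => u (p i))) ∈ CA m :=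
  hCA.comp n m f (fun i u => u (p i)) hf (fun i => hCA.proj m (p i))

theorem IsClone.exists_flatten (hCA : IsClone CA) {n : ℕ} {f : (Fin (n+1) → A) → A}
    (hf : f ∈ CA n) {m : Fin (n+1) → ℕ} {F : ∀ i, (Fin (m i + 1) → A) → A}
    (hF : ∀ i, F i ∈ CA (m i)) :
    ∃ (M : ℕ) (e : (Σ i, Fin (m i + 1)) ≃ Fin (M+1)),
      (fun u : Fin (M+1) → A => f (fun i => F i (fun l => u (e ⟨i, l⟩)))) ∈ CA M := by
  obtain ⟨M, hM⟩ : ∃ M, ∑ i, (m i + 1) = M + 1 :=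
    Nat.exists_eq_succ_of_ne_zero (by simp)
  exact ⟨M, finSigmaFinEquiv.trans (finCongr hM),
    hCA.comp n M f _ hf fun i => hCA.comp (m i) M (F i) _ (hF i) fun l => hCA.proj M _⟩

theorem RelLift.exists_normal_form (hCA : IsClone CA) {k : ℕ}
    {R : (Fin k → E) → Prop} {t : Fin k → ((E → A) → A)} (h : RelLift CA R t) :
    ∃ (n : ℕ) (f : (Fin (n+1) → A) → A) (bs : Fin (n+1) → Fin k → E),
      f ∈ CA n ∧ (∀ i, R (bs i)) ∧ ∀ j x, t j x = f (fun i => x (bs i j)) := by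
  induction h with
  | base b hb => exact ⟨0, fun u => u 0, fun _ => b, hCA.proj 0 0, fun _ => hb, fun _ _ => rfl⟩
  | app f hf g _ ih =>
    choose m F bs hF hR hEq using ih
    obtain ⟨M, e, hmem⟩ := hCA.exists_flatten hf hF
    refine ⟨M, _, fun j => Sigma.uncurry bs (e.symm j), hmem, fun j => hR _ _, fun j x => ?_⟩
    simp only [hEq, Equiv.symm_apply_apply]
    rfl

theorem FreeSet.relLift {g : (E → A) → A} (h : FreeSet CA E g) :
    RelLift CA (fun _ : Fin 1 → E => True) (fun _ => g) := by
  induction h with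
  | proj b => exact RelLift.base (fun _ => b) trivial
  | app f hf g _ ih => exact RelLift.app f hf (fun i _ => g i) ih

theorem FreeSet.exists_normal_form (hCA : IsClone CA) {g : (E → A) → A}
    (h : FreeSet CA E g) :
    ∃ (n : ℕ) (f : (Fin (n+1) → A) → A) (b : Fin (n+1) → E),
      f ∈ CA n ∧ ∀ x, g x = f (fun i => x (b i)) := by
  obtain ⟨n, f, bs, hf, -, hEq⟩ := h.relLift.exists_normal_form hCA
  exact ⟨n, f, fun i => bs i 0, hf, hEq 0⟩

end Normalization

theorem exists_injective_factor {ι E : Type} [Fintype ι] [Nonempty ι] (c : ι → E) :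
    ∃ (m : ℕ) (d : Fin (m+1) → E) (q : ι → Fin (m+1)), Injective d ∧ ∀ i, d (q i) = c i := by
  classical
  obtain ⟨m, hm⟩ := Nat.exists_eq_succ_of_ne_zero (Fintype.card_pos (α := Set.range c)).ne'
  let e := (Fintype.equivFin (Set.range c)).trans (finCongr hm)
  exact ⟨m, fun j => e.symm j, fun i => e ⟨c i, i, rfl⟩,
    Subtype.val_injective.comp e.symm.injective, fun i => by simp⟩

section Correspondence

variable {A E : Type} {CA : OpSet A}

theorem PreservesH1.apply_eq_of_forall_eq {ξ : CloneMap A E} (hξ : PreservesH1 CA ξ)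
    {n n' : ℕ} {f : (Fin (n+1) → A) → A} {f' : (Fin (n'+1) → A) → A}
    (hf : f ∈ CA n) (hf' : f' ∈ CA n') {b : Fin (n+1) → E} {b' : Fin (n'+1) → E}
    (heq : ∀ x : E → A, f (fun i => x (b i)) = f' (fun i => x (b' i))) :
    ξ n f b = ξ n' f' b' := by
  obtain ⟨m, d, q, hd, hdq⟩ := exists_injective_factor (Sum.elim b b')
  have hb : ∀ i, d (q (.inl i)) = b i := fun i => hdq (.inl i)
  have hb' : ∀ i, d (q (.inr i)) = b' i := fun i => hdq (.inr i)
  -- `d` is injective, so every `u : Fin (m+1) → A` is of the form `x ∘ d`.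
  have hminor : (fun u : Fin (m+1) → A => f (fun i => u (q (.inl i)))) =
      fun u => f' (fun i => u (q (.inr i))) := by
    funext u
    have hx := heq (extend d u fun _ => u 0)
    simpa only [← hb, ← hb', hd.extend_apply] using hx
  calc ξ n f b = ξ n f (fun i => d (q (.inl i))) := by simp only [hb]
    _ = ξ m (fun u => f (fun i => u (q (.inl i)))) d := by rw [hξ n m f hf]
    _ = ξ m (fun u => f' (fun i => u (q (.inr i)))) d := by rw [hminor]
    _ = ξ n' f' (fun i => d (q (.inr i))) := by rw [hξ n' m f' hf']
    _ = ξ n' f' b' := by simp only [hb']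

open Classical in
noncomputable def CloneMap.ofColoring (c : {g : (E → A) → A // FreeSet CA E g} → E) :
    CloneMap A E := fun n f =>
  if hf : f ∈ CA n then fun u =>
    c ⟨fun x => f (fun i => x (u i)), FreeSet.app f hf _ fun i => FreeSet.proj (u i)⟩
  else fun u => u 0

theorem CloneMap.ofColoring_apply (c : {g : (E → A) → A // FreeSet CA E g} → E) {n : ℕ}
    {f : (Fin (n+1) → A) → A} (hf : f ∈ CA n) (u : Fin (n+1) → E) :
    CloneMap.ofColoring c n f u =
      c ⟨fun x => f (fun i => x (u i)), FreeSet.app f hf _ fun i => FreeSet.proj (u i)⟩ := by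
  simp only [CloneMap.ofColoring, dif_pos hf]

theorem CloneMap.preservesH1_ofColoring (hCA : IsClone CA)
    (c : {g : (E → A) → A // FreeSet CA E g} → E) :
    PreservesH1 CA (CloneMap.ofColoring c) := by
  intro n m f hf p
  funext u
  rw [CloneMap.ofColoring_apply c (hCA.minor_mem hf p), CloneMap.ofColoring_apply c hf]

theorem IsColoring.mapsCloneInto_ofColoring {τ : Type} {br : τ → ℕ} {SB : RelStruct τ br E}
    {c : {g : (E → A) → A // FreeSet CA E g} → E} (hc : IsColoring CA SB c) :
    MapsCloneInto CA (Pol SB) (CloneMap.ofColoring c) := by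
  intro n f hf s ts hts
  simp only [CloneMap.ofColoring_apply c hf]
  exact hc s _ (RelLift.app f hf _ fun i => RelLift.base (ts i) (hts i)) _

theorem IsColoring.isH1Hom_ofColoring (hCA : IsClone CA) {τ : Type} {br : τ → ℕ}
    {SB : RelStruct τ br E} {c : {g : (E → A) → A // FreeSet CA E g} → E}
    (hc : IsColoring CA SB c) : IsH1Hom CA (Pol SB) (CloneMap.ofColoring c) :=
  ⟨hc.mapsCloneInto_ofColoring, CloneMap.preservesH1_ofColoring hCA c⟩

theorem CloneMap.preservesProj_ofColoring (hCA : IsClone CA)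
    {c : {g : (E → A) → A // FreeSet CA E g} → E}
    (hc : ∀ b : E, c ⟨fun x => x b, FreeSet.proj b⟩ = b) :
    PreservesProj (CloneMap.ofColoring c) := by
  intro n i
  funext u
  rw [CloneMap.ofColoring_apply c (hCA.proj n i)]
  exact hc (u i)

/-- Colors `g ∈ F_𝒜(E)` by `ξ f b` for a chosen normal form `g = (x ↦ f (x ∘ b))`. -/
noncomputable def CloneMap.toColoring (hCA : IsClone CA) (ξ : CloneMap A E) :
    {g : (E → A) → A // FreeSet CA E g} → E := fun g =>
  ξ (g.2.exists_normal_form hCA).choose (g.2.exists_normal_form hCA).choose_spec.choose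
    (g.2.exists_normal_form hCA).choose_spec.choose_spec.choose

theorem CloneMap.toColoring_eq (hCA : IsClone CA) {ξ : CloneMap A E} (hξ : PreservesH1 CA ξ)
    (g : {g : (E → A) → A // FreeSet CA E g}) {n : ℕ} {f : (Fin (n+1) → A) → A}
    {b : Fin (n+1) → E} (hf : f ∈ CA n) (hg : ∀ x, g.1 x = f (fun i => x (b i))) :
    ξ.toColoring hCA g = ξ n f b := by
  obtain ⟨hf₀, hg₀⟩ := (g.2.exists_normal_form hCA).choose_spec.choose_spec.choose_spec
  exact hξ.apply_eq_of_forall_eq hf₀ hf fun x => (hg₀ x).symm.trans (hg x)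

theorem IsH1Hom.isColoring_toColoring (hCA : IsClone CA) {τ : Type} {br : τ → ℕ}
    {SB : RelStruct τ br E} {ξ : CloneMap A E} (hξ : IsH1Hom CA (Pol SB) ξ) :
    IsColoring CA SB (ξ.toColoring hCA) := by
  intro s t ht hmem
  obtain ⟨n, f, bs, hf, hR, hEq⟩ := ht.exists_normal_form hCA
  have hcolor : (fun j => ξ.toColoring hCA ⟨t j, hmem j⟩) = fun j => ξ n f (fun i => bs i j) :=
    funext fun j => CloneMap.toColoring_eq hCA hξ.2 _ hf (hEq j)
  rw [hcolor]
  exact hξ.1 n f hf s bs hR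

theorem IsStrongH1Hom.toColoring_proj (hCA : IsClone CA) {CB : OpSet E} {ξ : CloneMap A E}
    (hξ : IsStrongH1Hom CA CB ξ) (b : E) :
    ξ.toColoring hCA ⟨fun x => x b, FreeSet.proj b⟩ = b := by
  rw [CloneMap.toColoring_eq hCA hξ.1.2 _ (hCA.proj 0 0) (b := fun _ => b) fun _ => rfl,
    hξ.2 0 0]

end Correspondence

/-- Proposition 7.3 of the paper. Let `CA` be a function clone and
`SB` a relational structure with polymorphism clone `Pol SB`. Then
(i) `CA` is `SB`-colorable iff there is an h1 clone homomorphism `CA → Pol SB`, and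
(ii) `CA` is strongly `SB`-colorable iff there is a strong h1 clone homomorphism
`CA → Pol SB`. -/
theorem stmt2 {A : Type} (CA : OpSet A) (hCA : IsClone CA)
    {τ : Type} {br : τ → ℕ} {E : Type} (SB : RelStruct τ br E) :
    ((∃ c, IsColoring CA SB c) ↔ ∃ ξ, IsH1Hom CA (Pol SB) ξ) ∧
    ((∃ c, IsStrongColoring CA SB c) ↔ ∃ ξ, IsStrongH1Hom CA (Pol SB) ξ) := by
  refine ⟨⟨fun ⟨c, hc⟩ => ?_, fun ⟨ξ, hξ⟩ => ?_⟩, ⟨fun ⟨c, hc⟩ => ?_, fun ⟨ξ, hξ⟩ => ?_⟩⟩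
  · exact ⟨_, hc.isH1Hom_ofColoring hCA⟩
  · exact ⟨_, hξ.isColoring_toColoring hCA⟩
  · exact ⟨_, hc.1.isH1Hom_ofColoring hCA, CloneMap.preservesProj_ofColoring hCA hc.2⟩
  · exact ⟨_, hξ.1.isColoring_toColoring hCA, hξ.toColoring_proj hCA⟩
end

section
/- Let V and W be varieties in disjoint signatures, each defined by a set of identities of height at most 1. If neither V nor W is congruence n-permutable for any n ≥ 2, then the join V ∨ W is not congruence n-permutable for any n ≥ 2. -/
/-! ### Algebras, terms, identities -/

/-- An algebra of functional signature `(F, ar)` (with nonempty domain, as usual in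
universal algebra). -/
structure BAlg (F : Type) (ar : F → ℕ) : Type 1 where
  D : Type
  nonempty : Nonempty D
  ops : ∀ f : F, (Fin (ar f) → D) → D

/-- Terms of signature `(F, ar)` over variables `V`. -/
inductive Term (F : Type) (ar : F → ℕ) (V : Type) : Type where
  | var (v : V) : Term F ar V
  | app (f : F) (t : Fin (ar f) → Term F ar V) : Term F ar V

/-- Evaluation of a term in an algebra under a variable assignment. -/
def Term.eval {F : Type} {ar : F → ℕ} {V D : Type}
    (ops : ∀ f : F, (Fin (ar f) → D) → D) (v : V → D) : Term F ar V → D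
  | .var x => v x
  | .app f t => ops f (fun i => (t i).eval ops v)

/-- A term has height 1: a single operation symbol applied to variables. -/
def Term.IsHeight1 {F : Type} {ar : F → ℕ} {V : Type} : Term F ar V → Prop
  | .var _ => False
  | .app _ t => ∀ i, ∃ x, t i = Term.var x

/-- A term has height at most 1: a variable, or an operation symbol applied to variables. -/
def Term.IsHeightLe1 {F : Type} {ar : F → ℕ} {V : Type} : Term F ar V → Prop
  | .var _ => True
  | .app _ t => ∀ i, ∃ x, t i = Term.var x

/-- An identity is a pair of terms over the variables `ℕ` (universally quantified). -/
abbrev Identity (F : Type) (ar : F → ℕ) := Term F ar ℕ × Term F ar ℕ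

/-- An algebra satisfies an identity. -/
def SatisfiesId {F : Type} {ar : F → ℕ} (A : BAlg F ar) (e : Identity F ar) : Prop :=
  ∀ v : ℕ → A.D, e.1.eval A.ops v = e.2.eval A.ops v

section Ops

variable {F : Type} {ar : F → ℕ}

/-- `h` is an algebra homomorphism. -/
def AlgHomOf (A B : BAlg F ar) (h : A.D → B.D) : Prop :=
  ∀ f t, h (A.ops f t) = B.ops f (fun i => h (t i))

/-- `H K`: homomorphic images of members of `K` (up to renaming of elements). -/
def HAlg (K : Set (BAlg F ar)) : Set (BAlg F ar) :=
  { B | ∃ A ∈ K, ∃ h : A.D → B.D, Function.Surjective h ∧ AlgHomOf A B h }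

/-- `S K`: subalgebras of members of `K` (up to renaming of elements). -/
def SAlg (K : Set (BAlg F ar)) : Set (BAlg F ar) :=
  { B | ∃ A ∈ K, ∃ h : B.D → A.D, Function.Injective h ∧ AlgHomOf B A h }

/-- `P K`: products of families of members of `K` (up to renaming of elements). -/
def PAlg (K : Set (BAlg F ar)) : Set (BAlg F ar) :=
  { B | ∃ (I : Type) (A : I → BAlg F ar), (∀ i, A i ∈ K) ∧
      ∃ e : B.D ≃ (∀ i, (A i).D),
        ∀ f t, e (B.ops f t) = fun i => (A i).ops f (fun j => e (t j) i) }

/-- `Pfin K`: finite products of members of `K` (up to renaming of elements). -/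
def PfinAlg (K : Set (BAlg F ar)) : Set (BAlg F ar) :=
  { B | ∃ (m : ℕ) (A : Fin m → BAlg F ar), (∀ i, A i ∈ K) ∧
      ∃ e : B.D ≃ (∀ i, (A i).D),
        ∀ f t, e (B.ops f t) = fun i => (A i).ops f (fun j => e (t j) i) }

/-- `Tra K`: reflections of members of `K`. -/
def TraAlg (K : Set (BAlg F ar)) : Set (BAlg F ar) :=
  { B | ∃ A ∈ K, ∃ (h1 : B.D → A.D) (h2 : A.D → B.D),
      ∀ f t, B.ops f t = h2 (A.ops f (fun i => h1 (t i))) }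

/-- `Ret K`: retractions of members of `K`. -/
def RetAlg (K : Set (BAlg F ar)) : Set (BAlg F ar) :=
  { B | ∃ A ∈ K, ∃ (h1 : B.D → A.D) (h2 : A.D → B.D), (∀ b, h2 (h1 b) = b) ∧
      ∀ f t, B.ops f t = h2 (A.ops f (fun i => h1 (t i))) }

end Ops

/-! ### Congruences, congruence conditions, and joins of varieties -/

section Cong

variable {D : Type}

/-- A congruence of an algebra: an equivalence relation compatible with all operations. -/
def IsCongruence {F : Type} {ar : F → ℕ} (ops : ∀ f : F, (Fin (ar f) → D) → D)
    (r : D → D → Prop) : Prop :=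
  Equivalence r ∧ ∀ (f : F) (t t' : Fin (ar f) → D), (∀ i, r (t i) (t' i)) →
    r (ops f t) (ops f t')

/-- The alternating relational composition `α ∘ β ∘ α ∘ ⋯` with `n` factors. -/
def AltComp (α β : D → D → Prop) : ℕ → D → D → Prop
  | 0 => Eq
  | n + 1 => fun x z => ∃ y, α x y ∧ AltComp β α n y z

/-- The join of two congruences: the smallest congruence containing both. -/
def CongJoin {F : Type} {ar : F → ℕ} (ops : ∀ f : F, (Fin (ar f) → D) → D)
    (α β : D → D → Prop) : D → D → Prop :=
  fun x y => ∀ θ : D → D → Prop, IsCongruence ops θ →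
    (∀ a b, α a b → θ a b) → (∀ a b, β a b → θ a b) → θ x y

end Cong

section Variety

variable {F : Type} {ar : F → ℕ}

/-- The variety defined by a set of identities is congruence `n`-permutable. -/
def CongNPermutable (E : Set (Identity F ar)) (n : ℕ) : Prop :=
  ∀ A : BAlg F ar, (∀ e ∈ E, SatisfiesId A e) →
    ∀ α β : A.D → A.D → Prop, IsCongruence A.ops α → IsCongruence A.ops β →
      ∀ x y, AltComp α β n x y ↔ AltComp β α n x y

/-- The variety defined by a set of identities is congruence modular. -/
def CongModular (E : Set (Identity F ar)) : Prop :=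
  ∀ A : BAlg F ar, (∀ e ∈ E, SatisfiesId A e) →
    ∀ α β γ : A.D → A.D → Prop,
      IsCongruence A.ops α → IsCongruence A.ops β → IsCongruence A.ops γ →
      (∀ a b, α a b → γ a b) →
      ∀ x y, CongJoin A.ops α (fun a b => β a b ∧ γ a b) x y ↔
        (CongJoin A.ops α β x y ∧ γ x y)

end Variety

section Join

variable {F G : Type} {arF : F → ℕ} {arG : G → ℕ} {V : Type}

/-- Inclusion of terms into the disjoint-union signature (left part). -/
def Term.sumInl : Term F arF V → Term (F ⊕ G) (Sum.elim arF arG) V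
  | .var v => .var v
  | .app f t => .app (Sum.inl f) (fun i => (t i).sumInl)

/-- Inclusion of terms into the disjoint-union signature (right part). -/
def Term.sumInr : Term G arG V → Term (F ⊕ G) (Sum.elim arF arG) V
  | .var v => .var v
  | .app f t => .app (Sum.inr f) (fun i => (t i).sumInr)

/-- The defining identities of the join `V ∨ W` of two varieties in disjoint signatures:
the union of the defining identities of both, in the disjoint-union signature. -/
def JoinIds (EV : Set (Identity F arF)) (EW : Set (Identity G arG)) :
    Set (Identity (F ⊕ G) (Sum.elim arF arG)) :=
  (fun e : Identity F arF => (e.1.sumInl, e.2.sumInl)) '' EV ∪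
    (fun e : Identity G arG => (e.1.sumInr, e.2.sumInr)) '' EW

end Join

/-! ### Auxiliary machinery for the proof -/

section AuxBasic

variable {F : Type} {ar : F → ℕ}

/-- Substitution of terms for variables. -/
def tsubst (θ : ℕ → Term F ar ℕ) : Term F ar ℕ → Term F ar ℕ
  | .var v => θ v
  | .app f t => .app f (fun i => tsubst θ (t i))

lemma eval_tsubst {D : Type} (ops : ∀ f : F, (Fin (ar f) → D) → D)
    (θ : ℕ → Term F ar ℕ) (v : ℕ → D) (t : Term F ar ℕ) :
    (tsubst θ t).eval ops v = t.eval ops (fun i => (θ i).eval ops v) := by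
  induction t with
  | var w => rfl
  | app f t ih => simp only [tsubst, Term.eval]; exact congrArg _ (funext fun i => ih i)

/-- Renaming of variables. -/
def trename (σ : ℕ → ℕ) (t : Term F ar ℕ) : Term F ar ℕ :=
  tsubst (fun i => .var (σ i)) t

lemma eval_trename {D : Type} (ops : ∀ f : F, (Fin (ar f) → D) → D)
    (σ : ℕ → ℕ) (v : ℕ → D) (t : Term F ar ℕ) :
    (trename σ t).eval ops v = t.eval ops (fun i => v (σ i)) :=
  eval_tsubst ops _ v t

lemma trename_trename (σ τ : ℕ → ℕ) (t : Term F ar ℕ) :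
    trename σ (trename τ t) = trename (σ ∘ τ) t := by
  induction t with
  | var w => rfl
  | app f t ih =>
      simp only [trename, tsubst] at *
      exact congrArg _ (funext fun i => ih i)

lemma trename_var (σ : ℕ → ℕ) (v : ℕ) : trename (F := F) (ar := ar) σ (.var v) = .var (σ v) := rfl

/-- `A` is a model of the theory `E`. -/
def Models (A : BAlg F ar) (E : Set (Identity F ar)) : Prop :=
  ∀ e ∈ E, SatisfiesId A e

/-- Semantic equivalence of terms relative to a theory. -/
def SemEq (E : Set (Identity F ar)) (u v : Term F ar ℕ) : Prop :=
  ∀ A : BAlg F ar, Models A E → ∀ w : ℕ → A.D, u.eval A.ops w = v.eval A.ops w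

lemma SemEq.refl' (E : Set (Identity F ar)) (u : Term F ar ℕ) : SemEq E u u :=
  fun _ _ _ => rfl

lemma SemEq.symm' {E : Set (Identity F ar)} {u v : Term F ar ℕ} (h : SemEq E u v) :
    SemEq E v u := fun A hA w => (h A hA w).symm

lemma SemEq.trans' {E : Set (Identity F ar)} {u v t : Term F ar ℕ}
    (h : SemEq E u v) (h' : SemEq E v t) : SemEq E u t :=
  fun A hA w => (h A hA w).trans (h' A hA w)

lemma SemEq.subst {E : Set (Identity F ar)} {u v : Term F ar ℕ} (h : SemEq E u v)
    (θ : ℕ → Term F ar ℕ) : SemEq E (tsubst θ u) (tsubst θ v) := by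
  intro A hA w
  rw [eval_tsubst, eval_tsubst]
  exact h A hA _

lemma SemEq.rename {E : Set (Identity F ar)} {u v : Term F ar ℕ} (h : SemEq E u v)
    (σ : ℕ → ℕ) : SemEq E (trename σ u) (trename σ v) :=
  h.subst _

lemma semEq_of_mem {E : Set (Identity F ar)} {e : Identity F ar} (he : e ∈ E) :
    SemEq E e.1 e.2 := fun A hA w => hA e he w

/-- Evaluation respects congruences. -/
lemma eval_congr {D : Type} {ops : ∀ f : F, (Fin (ar f) → D) → D} {ρ : D → D → Prop}
    (hρ : IsCongruence ops ρ) (t : Term F ar ℕ) {v v' : ℕ → D}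
    (h : ∀ i, ρ (v i) (v' i)) : ρ (t.eval ops v) (t.eval ops v') := by
  induction t with
  | var w => exact h w
  | app f t ih => exact hρ.2 f _ _ fun i => ih i

end AuxBasic

section AuxChains

variable {D : Type}

/-- Explicit chain form of alternating composition: step `s` (0-based) uses `γ` iff `s` even. -/
def ChainP (γ δ : D → D → Prop) (M : ℕ) (c : ℕ → D) : Prop :=
  ∀ s, s < M → (if s % 2 = 0 then γ else δ) (c s) (c (s+1))

lemma altcomp_of_chain {γ δ : D → D → Prop} {M : ℕ} {c : ℕ → D}
    (h : ChainP γ δ M c) : AltComp γ δ M (c 0) (c M) := by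
  induction M generalizing γ δ c with
  | zero => rfl
  | succ M ih =>
      refine ⟨c 1, ?_, ?_⟩
      · have := h 0 (by omega); simpa using this
      · have hc : ChainP δ γ M (fun s => c (s+1)) := by
          intro s hs
          have := h (s+1) (by omega)
          rcases Nat.mod_two_eq_zero_or_one s with hp | hp
          · have hp1 : (s+1) % 2 = 1 := by omega
            simpa [hp, hp1] using this
          · have hp1 : (s+1) % 2 = 0 := by omega
            simpa [hp, hp1] using this
        exact ih hc

lemma chain_of_altcomp {γ δ : D → D → Prop} {M : ℕ} {x y : D}
    (h : AltComp γ δ M x y) : ∃ c : ℕ → D, c 0 = x ∧ c M = y ∧ ChainP γ δ M c := by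
  induction M generalizing γ δ x with
  | zero => exact ⟨fun _ => x, rfl, h.symm ▸ rfl, fun s hs => absurd hs (by omega)⟩
  | succ M ih =>
      obtain ⟨z, hxz, h'⟩ := h
      obtain ⟨c', h0, hM, hc⟩ := ih h'
      refine ⟨fun s => match s with | 0 => x | (s+1) => c' s, rfl, hM, ?_⟩
      intro s hs
      match s with
      | 0 => simpa [h0] using hxz
      | (s+1) =>
          have := hc s (by omega)
          rcases Nat.mod_two_eq_zero_or_one s with hp | hp
          · have hp1 : (s+1) % 2 = 1 := by omega
            simpa [hp, hp1] using this
          · have hp1 : (s+1) % 2 = 0 := by omega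
            simpa [hp, hp1] using this

lemma altcomp_refl {γ δ : D → D → Prop} (hγ : ∀ x, γ x x) (hδ : ∀ x, δ x x)
    (M : ℕ) (x : D) : AltComp γ δ M x x := by
  induction M generalizing γ δ with
  | zero => rfl
  | succ M ih => exact ⟨x, hγ x, ih hδ hγ⟩

lemma exists_chain {α : Type _} {R : α → α → Prop} {a b : α}
    (h : Relation.ReflTransGen R a b) :
    ∃ N : ℕ, ∃ w : ℕ → α, w 0 = a ∧ w N = b ∧ ∀ j, j < N → R (w j) (w (j+1)) := by
  induction h with
  | refl => exact ⟨0, fun _ => a, rfl, rfl, fun j hj => absurd hj (by omega)⟩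
  | @tail b' c' hab hbc ih =>
      obtain ⟨N, w, h0, hN, hs⟩ := ih
      refine ⟨N+1, fun j => if j ≤ N then w j else c', by simp [h0], by simp, ?_⟩
      intro j hj
      show R (if j ≤ N then w j else c') (if j+1 ≤ N then w (j+1) else c')
      rcases Nat.lt_or_ge j N with hjN | hjN
      · rw [if_pos (by omega : j ≤ N), if_pos (by omega : j+1 ≤ N)]
        exact hs j hjN
      · have hjN' : j = N := by omega
        subst hjN'
        rw [if_pos (le_refl j), if_neg (by omega), hN]
        exact hbc

end AuxChains
section AuxQuasi

variable {F : Type} {ar : F → ℕ}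

/-- One-step relation generating the canonical compatible quasiorder on the free algebra
over the ordered set of generators `ℕ`. -/
def Rhat (E : Set (Identity F ar)) (u v : Term F ar ℕ) : Prop :=
  ∃ (t : Term F ar ℕ) (σ τ : ℕ → ℕ), (∀ i, σ i ≤ τ i) ∧
    SemEq E u (trename σ t) ∧ SemEq E v (trename τ t)

/-- The canonical compatible quasiorder on the free algebra. -/
def Qrel (E : Set (Identity F ar)) : Term F ar ℕ → Term F ar ℕ → Prop :=
  Relation.ReflTransGen (Rhat E)

lemma rhat_of_semEq {E : Set (Identity F ar)} {u v : Term F ar ℕ} (h : SemEq E u v) :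
    Rhat E u v := by
  refine ⟨u, id, id, fun i => le_refl _, ?_, ?_⟩
  · have : trename (F := F) (ar := ar) id u = u := by
      have : ∀ t : Term F ar ℕ, trename id t = t := by
        intro t
        induction t with
        | var w => rfl
        | app f t ih => simp only [trename, tsubst] at *; exact congrArg _ (funext fun i => ih i)
      exact this u
    rw [this]; exact SemEq.refl' E u
  · have : trename (F := F) (ar := ar) id u = u := by
      have : ∀ t : Term F ar ℕ, trename id t = t := by
        intro t
        induction t with
        | var w => rfl
        | app f t ih => simp only [trename, tsubst] at *; exact congrArg _ (funext fun i => ih i)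
      exact this u
    rw [this]; exact h.symm'

lemma qrel_congr_right {E : Set (Identity F ar)} {q u v : Term F ar ℕ}
    (h : SemEq E u v) (hq : Qrel E q u) : Qrel E q v :=
  hq.tail (rhat_of_semEq h)

lemma qrel_var_le {E : Set (Identity F ar)} {p q : ℕ} (h : p ≤ q) :
    Qrel E (.var p) (.var q) :=
  Relation.ReflTransGen.single
    ⟨.var 0, fun _ => p, fun _ => q, fun _ => h, SemEq.refl' _ _, SemEq.refl' _ _⟩

/-- If the theory proves two distinct variables equal, it is `2`-permutable (all its
models are singletons). -/
lemma perm_two_of_trivial {E : Set (Identity F ar)} {a b : ℕ} (hab : a ≠ b)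
    (h : SemEq E (.var a) (.var b)) : CongNPermutable E 2 := by
  intro A hA α β hα hβ x y
  have hxy : x = y := by
    have := h A hA (fun i => if i = a then x else y)
    simpa [Term.eval, hab.symm] using this
  subst hxy
  constructor
  · intro _; exact altcomp_refl (fun z => hβ.1.refl z) (fun z => hα.1.refl z) 2 x
  · intro _; exact altcomp_refl (fun z => hα.1.refl z) (fun z => hβ.1.refl z) 2 x

/-- Key soundness construction: a `Qrel`-chain from `var 1` down to `var 0` of length
`N ≥ 1` (in collapsed form: all renaming values `≤ 1`) yields congruence
`(N+1)`-permutability. -/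
lemma step3_half {E : Set (Identity F ar)} {N : ℕ} (hN : 1 ≤ N)
    (w t : ℕ → Term F ar ℕ) (σ τ : ℕ → ℕ → ℕ)
    (hστ : ∀ j i, σ j i ≤ τ j i) (hval : ∀ j i, τ j i ≤ 1)
    (h0 : w 0 = .var 1) (hNw : w N = .var 0)
    (hlow : ∀ j, j < N → SemEq E (w j) (trename (σ j) (t j)))
    (hhigh : ∀ j, j < N → SemEq E (w (j+1)) (trename (τ j) (t j)))
    (A : BAlg F ar) (hA : Models A E)
    (γ δ : A.D → A.D → Prop) (hγ : IsCongruence A.ops γ) (hδ : IsCongruence A.ops δ) :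
    ∀ x y, AltComp γ δ (N+1) x y → AltComp δ γ (N+1) x y := by
  intro x y hxy
  obtain ⟨c, hc0, hcM, hc⟩ := chain_of_altcomp hxy
  -- assignments and the terms `q j a m b`
  set WW : A.D → A.D → ℕ → A.D := fun a b i => if i = 0 then a else if i = 1 then b else a
    with hWW
  set q : ℕ → A.D → A.D → A.D → A.D := fun j a m b =>
    (t j).eval A.ops (fun v => if σ j v = τ j v then WW a b (σ j v) else m) with hq
  have htog : ∀ j v, σ j v ≠ τ j v → σ j v = 0 ∧ τ j v = 1 := by
    intro j v h; have h1 := hστ j v; have h2 := hval j v; omega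
  -- F1 and F2
  have F1 : ∀ j, j < N → ∀ a b, q j a a b = (w j).eval A.ops (WW a b) := by
    intro j hj a b
    have h1 := hlow j hj A hA (WW a b)
    rw [h1, eval_trename]
    simp only [hq]
    congr 1
    funext v
    by_cases hvv : σ j v = τ j v
    · simp [hvv]
    · obtain ⟨e0, _⟩ := htog j v hvv
      rw [if_neg hvv, e0]
      simp [hWW]
  have F2 : ∀ j, j < N → ∀ a b, q j a b b = (w (j+1)).eval A.ops (WW a b) := by
    intro j hj a b
    have h1 := hhigh j hj A hA (WW a b)
    rw [h1, eval_trename]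
    simp only [hq]
    congr 1
    funext v
    by_cases hvv : σ j v = τ j v
    · simp [hvv]
    · obtain ⟨_, e1⟩ := htog j v hvv
      rw [if_neg hvv, e1]
      simp [hWW]
  have Fstart : ∀ a b, (w 0).eval A.ops (WW a b) = b := by
    intro a b; rw [h0]; simp [Term.eval, hWW]
  have Fend : ∀ a b, (w N).eval A.ops (WW a b) = a := by
    intro a b; rw [hNw]; simp [Term.eval, hWW]
  -- congruence moves on q
  have qmove : ∀ (ρ : A.D → A.D → Prop), IsCongruence A.ops ρ →
      ∀ j a a' m m' b b', ρ a a' → ρ m m' → ρ b b' → ρ (q j a m b) (q j a' m' b') := by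
    intro ρ hρ j a a' m m' b b' ha hm hb
    apply eval_congr hρ
    intro v
    by_cases hvv : σ j v = τ j v
    · simp only [hvv, if_pos]
      by_cases h0' : τ j v = 0
      · simp [h0', hWW, ha]
      · by_cases h1' : τ j v = 1
        · simp [h1', hWW, hb]
        · simp [h0', h1', hWW, ha]
    · simp [hvv, hm]
  -- the reversed chain
  set e : ℕ → A.D := fun s => if s = 0 then c 0 else if s ≤ N then
    q (s-1) (c (s+1)) (c s) (c (s-1)) else c (N+1) with he
  have he0 : e 0 = c 0 := by simp [he]
  have heTop : e (N+1) = c (N+1) := by simp [he]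
  have heMid : ∀ s, 1 ≤ s → s ≤ N → e s = q (s-1) (c (s+1)) (c s) (c (s-1)) := by
    intro s h1 h2
    simp only [he]
    rw [if_neg (by omega), if_pos h2]
  -- chain facts
  have hstep : ∀ s, s < N + 1 → (if s % 2 = 0 then γ else δ) (c s) (c (s+1)) := hc
  have main : ChainP δ γ (N+1) e := by
    intro s hs
    set ρ : A.D → A.D → Prop := if s % 2 = 0 then δ else γ with hρdef
    have hρ : IsCongruence A.ops ρ := by rw [hρdef]; split <;> assumption
    have hρE : Equivalence ρ := hρ.1
    have hplus : s + 1 < N + 1 → ρ (c (s+1)) (c (s+2)) := by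
      intro hr
      have h1 := hstep (s+1) hr
      rw [hρdef]
      rcases Nat.mod_two_eq_zero_or_one s with hp | hp
      · rw [if_pos hp]; rw [if_neg (by omega)] at h1; exact h1
      · rw [if_neg (by omega)]; rw [if_pos (by omega)] at h1; exact h1
    have hminus : 1 ≤ s → ρ (c (s-1)) (c s) := by
      intro hr
      have h1 := hstep (s-1) (by omega)
      have hs1 : s - 1 + 1 = s := by omega
      rw [hs1] at h1
      rw [hρdef]
      rcases Nat.mod_two_eq_zero_or_one s with hp | hp
      · rw [if_pos hp]; rw [if_neg (by omega)] at h1; exact h1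
      · rw [if_neg (by omega)]; rw [if_pos (by omega)] at h1; exact h1
    show ρ (e s) (e (s+1))
    by_cases hs0 : s = 0
    · subst hs0
      rw [he0]
      rw [show (0:ℕ)+1 = 1 from rfl, heMid 1 (le_refl 1) hN]
      norm_num
      have h2 : ρ (c 1) (c 2) := hplus (by omega)
      have mv : ρ (q 0 (c 2) (c 2) (c 0)) (q 0 (c 2) (c 1) (c 0)) :=
        qmove ρ hρ 0 _ _ _ _ _ _ (hρE.refl _) (hρE.symm h2) (hρE.refl _)
      have hq0 : q 0 (c 2) (c 2) (c 0) = c 0 := by rw [F1 0 (by omega), Fstart]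
      rw [hq0] at mv
      exact mv
    · by_cases hsN : s = N
      · have hTop' : e (s+1) = c (s+1) := by rw [hsN]; exact heTop
        rw [heMid s (by omega) (by omega), hTop']
        have hm : ρ (c (s-1)) (c s) := hminus (by omega)
        have mv : ρ (q (s-1) (c (s+1)) (c s) (c (s-1)))
            (q (s-1) (c (s+1)) (c (s-1)) (c (s-1))) :=
          qmove ρ hρ _ _ _ _ _ _ _ (hρE.refl _) (hρE.symm hm) (hρE.refl _)
        have hcollapse : q (s-1) (c (s+1)) (c (s-1)) (c (s-1)) = c (s+1) := by
          have hF := F2 (s-1) (by omega) (c (s+1)) (c (s-1))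
          rw [show s - 1 + 1 = s by omega] at hF
          rw [hF, hsN, Fend]
        rw [hcollapse] at mv
        exact mv
      · have hs1 : 1 ≤ s := by omega
        have hsN' : s < N := by omega
        rw [heMid s hs1 (by omega), heMid (s+1) (by omega) (by omega)]
        simp only [Nat.add_sub_cancel]
        have hp2 : ρ (c (s+1)) (c (s+2)) := hplus (by omega)
        have hm : ρ (c (s-1)) (c s) := hminus hs1
        have mv1 : ρ (q (s-1) (c (s+1)) (c s) (c (s-1)))
            (q (s-1) (c (s+2)) (c (s-1)) (c (s-1))) :=
          qmove ρ hρ _ _ _ _ _ _ _ hp2 (hρE.symm hm) (hρE.refl _)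
        have hmid : q (s-1) (c (s+2)) (c (s-1)) (c (s-1)) = q s (c (s+2)) (c (s+2)) (c (s-1)) := by
          have hFa := F2 (s-1) (by omega) (c (s+2)) (c (s-1))
          rw [show s - 1 + 1 = s by omega] at hFa
          rw [hFa, ← F1 s hsN']
        have mv2 : ρ (q s (c (s+2)) (c (s+2)) (c (s-1))) (q s (c (s+2)) (c (s+1)) (c s)) :=
          qmove ρ hρ _ _ _ _ _ _ _ (hρE.refl _) (hρE.symm hp2) hm
        rw [hmid] at mv1
        exact hρE.trans mv1 mv2
  have hfin := altcomp_of_chain main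
  rw [he0, heTop, hc0, hcM] at hfin
  exact hfin

/-- The canonical quasiorder does not relate `var 1` down to `var 0` when the theory is
nowhere congruence permutable. -/
theorem notQ10 {E : Set (Identity F ar)} (hE : ∀ m, 2 ≤ m → ¬ CongNPermutable E m) :
    ¬ Qrel E (.var 1) (.var 0) := by
  intro hQ
  obtain ⟨N, w, hw0, hwN, hstep⟩ := exists_chain hQ
  rcases Nat.eq_zero_or_pos N with hN0 | hNpos
  · subst hN0
    rw [hw0] at hwN
    injection hwN with h
    exact absurd h (by norm_num)
  · have hdata : ∀ j, ∃ t σ τ, (∀ i, σ i ≤ τ i) ∧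
        (j < N → SemEq E (w j) (trename σ t) ∧ SemEq E (w (j+1)) (trename τ t)) := by
      intro j
      by_cases hj : j < N
      · obtain ⟨t, σ, τ, h1, h2, h3⟩ := hstep j hj
        exact ⟨t, σ, τ, h1, fun _ => ⟨h2, h3⟩⟩
      · exact ⟨.var 0, id, id, fun i => le_refl _, fun h => absurd h hj⟩
    choose t σ τ hστ hlink using hdata
    have hperm : CongNPermutable E (N+1) := by
      intro A hA γ δ hγ hδ x y
      have harg1 : ∀ j i, (fun v => min v 1) (σ j i) ≤ (fun v => min v 1) (τ j i) := by
        intro j i; have := hστ j i; simp only; omega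
      have harg2 : ∀ (j i : ℕ), (fun v => min v 1) (τ j i) ≤ 1 := by
        intro j i; simp only; omega
      have harg3 : trename (fun v => min v 1) (w 0) = .var 1 := by
        rw [hw0]; simp [trename, tsubst]
      have harg4 : trename (fun v => min v 1) (w N) = .var 0 := by
        rw [hwN]; simp [trename, tsubst]
      have harg5 : ∀ j, j < N → SemEq E (trename (fun v => min v 1) (w j))
          (trename ((fun v => min v 1) ∘ σ j) (t j)) := by
        intro j hj
        have l1 := (hlink j hj).1
        have := l1.rename (fun v => min v 1)
        rwa [trename_trename] at this
      have harg6 : ∀ j, j < N → SemEq E (trename (fun v => min v 1) (w (j+1)))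
          (trename ((fun v => min v 1) ∘ τ j) (t j)) := by
        intro j hj
        have l2 := (hlink j hj).2
        have := l2.rename (fun v => min v 1)
        rwa [trename_trename] at this
      constructor
      · exact step3_half hNpos _ t _ _ harg1 harg2 harg3 harg4 harg5 harg6 A hA γ δ hγ hδ x y
      · exact step3_half hNpos _ t _ _ harg1 harg2 harg3 harg4 harg5 harg6 A hA δ γ hδ hγ x y
    exact hE (N+1) (by omega) hperm

end AuxQuasi
section AuxBool

variable {F : Type} {ar : F → ℕ}

/-- Bool order as a relation. -/
def bole (x y : Bool) : Prop := x = true → y = true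

/-- Indicator of the upset of `var 1` in the canonical quasiorder. -/
noncomputable def hset (E : Set (Identity F ar)) (p : Term F ar ℕ) : Bool :=
  @decide (Qrel E (.var 1) p) (Classical.propDecidable _)

lemma hset_eq_true {E : Set (Identity F ar)} {p : Term F ar ℕ} :
    hset E p = true ↔ Qrel E (.var 1) p := by
  simp [hset]

lemma hset_congr {E : Set (Identity F ar)} {p p' : Term F ar ℕ} (h : SemEq E p p') :
    hset E p = hset E p' := by
  have h1 : Qrel E (.var 1) p ↔ Qrel E (.var 1) p' :=
    ⟨fun hq => qrel_congr_right h hq, fun hq => qrel_congr_right h.symm' hq⟩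
  simp [hset, h1]

/-- Generator section. -/
def sB : Bool → Term F ar ℕ := fun b => .var (cond b 1 0)

/-- The operations of the two-element chain model. -/
noncomputable def opsB (E : Set (Identity F ar)) : ∀ f : F, (Fin (ar f) → Bool) → Bool :=
  fun f ε => hset E (.app f (fun i => sB (ε i)))

lemma trename_enc (f : F) (ε : Fin (ar f) → Bool) :
    trename (fun v => if h3 : v - 2 < ar f ∧ 2 ≤ v then cond (ε ⟨v-2, h3.1⟩) 1 0 else v)
      (.app f (fun i => .var (i.val + 2))) = .app f (fun i => sB (ε i)) := by
  simp only [trename, tsubst]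
  congr 1
  funext i
  have h3 : (i.val + 2) - 2 < ar f ∧ 2 ≤ i.val + 2 := by
    constructor
    · simp only [Nat.add_sub_cancel]; exact i.isLt
    · omega
  rw [dif_pos h3]
  simp [sB]

lemma opsB_mono (E : Set (Identity F ar)) (f : F) (ε ε' : Fin (ar f) → Bool)
    (h : ∀ i, bole (ε i) (ε' i)) : bole (opsB E f ε) (opsB E f ε') := by
  intro hx
  rw [show opsB E f ε' = hset E (.app f (fun i => sB (ε' i))) from rfl, hset_eq_true]
  rw [show opsB E f ε = hset E (.app f (fun i => sB (ε i))) from rfl, hset_eq_true] at hx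
  refine hx.tail ?_
  refine ⟨.app f (fun i => .var (i.val + 2)),
    (fun v => if h3 : v - 2 < ar f ∧ 2 ≤ v then cond (ε ⟨v-2, h3.1⟩) 1 0 else v),
    (fun v => if h3 : v - 2 < ar f ∧ 2 ≤ v then cond (ε' ⟨v-2, h3.1⟩) 1 0 else v),
    ?_, ?_, ?_⟩
  · intro v
    dsimp only
    by_cases h3 : v - 2 < ar f ∧ 2 ≤ v
    · rw [dif_pos h3, dif_pos h3]
      have := h ⟨v-2, h3.1⟩
      revert this
      cases ε ⟨v-2, h3.1⟩ <;> cases ε' ⟨v-2, h3.1⟩ <;> intro h' <;> simp_all [bole]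
    · rw [dif_neg h3, dif_neg h3]
  · rw [trename_enc]; exact SemEq.refl' _ _
  · rw [trename_enc]; exact SemEq.refl' _ _

/-- Evaluation of a height-at-most-one term in the two-element model. -/
lemma opsB_eval (E : Set (Identity F ar)) (hE : ∀ m, 2 ≤ m → ¬ CongNPermutable E m)
    (u : Term F ar ℕ) (hu : u.IsHeightLe1) (w : ℕ → Bool) :
    u.eval (opsB E) w = hset E (tsubst (fun j => sB (w j)) u) := by
  cases u with
  | var a =>
      show w a = hset E (sB (w a))
      cases ha : w a
      · show false = hset E (.var 0)
        have : ¬ Qrel E (.var 1) (.var 0) := notQ10 hE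
        simp [hset, this]
      · show true = hset E (.var 1)
        have : Qrel E (.var 1) (.var 1) := Relation.ReflTransGen.refl
        simp [hset, this]
  | app f tv =>
      have hx : ∀ i, ∃ x, tv i = Term.var x := hu
      choose xv hxv using hx
      show opsB E f (fun i => (tv i).eval (opsB E) w)
        = hset E (.app f (fun i => tsubst (fun j => sB (w j)) (tv i)))
      have e1 : (fun i => (tv i).eval (opsB E) w) = fun i => w (xv i) := by
        funext i; rw [hxv i]; rfl
      have e2 : (fun i => tsubst (fun j => sB (w j)) (tv i)) = fun i => sB (w (xv i)) := by
        funext i; rw [hxv i]; rfl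
      rw [e1, e2]
      rfl

/-- The two-element chain model of a height-at-most-one theory that is nowhere
congruence permutable. -/
lemma opsB_models (E : Set (Identity F ar)) (hE : ∀ m, 2 ≤ m → ¬ CongNPermutable E m)
    (hH : ∀ e ∈ E, e.1.IsHeightLe1 ∧ e.2.IsHeightLe1) :
    Models (⟨Bool, ⟨true⟩, opsB E⟩ : BAlg F ar) E := by
  intro e he w
  show e.1.eval (opsB E) w = e.2.eval (opsB E) w
  rw [opsB_eval E hE e.1 (hH e he).1 w, opsB_eval E hE e.2 (hH e he).2 w]
  exact hset_congr ((semEq_of_mem he).subst _)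

end AuxBool

section AuxP1

variable {H : Type} {arH : H → ℕ}

/-- If a theory has a model on the two-element chain all of whose operations are
monotone, then it is not congruence `n`-permutable for any `n ≥ 2`. -/
lemma chain_model_not_perm (ops : ∀ h : H, (Fin (arH h) → Bool) → Bool)
    (mono : ∀ h ε ε', (∀ i, bole (ε i) (ε' i)) → bole (ops h ε) (ops h ε'))
    (E : Set (Identity H arH))
    (hsat : Models (⟨Bool, ⟨true⟩, ops⟩ : BAlg H arH) E)
    (n : ℕ) (hn : 2 ≤ n) : ¬ CongNPermutable E n := by
  intro hperm
  -- the algebra of antitone tuples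
  set Dn := {v : Fin n → Bool // ∀ i j : Fin n, i ≤ j → bole (v j) (v i)} with hDn
  have hops : ∀ (h : H) (t : Fin (arH h) → Dn), ∀ i j : Fin n, i ≤ j →
      bole (ops h (fun m => (t m).1 j)) (ops h (fun m => (t m).1 i)) := by
    intro h t i j hij
    exact mono h _ _ fun m => (t m).2 i j hij
  set An : BAlg H arH := ⟨Dn, ⟨⟨fun _ => false, fun i j _ => fun h => h⟩⟩,
    fun h t => ⟨fun i => ops h (fun m => (t m).1 i), fun i j hij => hops h t i j hij⟩⟩ with hAn
  have evalc : ∀ (t : Term H arH ℕ) (v : ℕ → Dn) (i : Fin n),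
      (t.eval An.ops v).1 i = t.eval ops (fun m => (v m).1 i) := by
    intro t
    induction t with
    | var a => intro v i; rfl
    | app f ch ih =>
        intro v i
        show ops f (fun m => ((ch m).eval An.ops v).1 i) = ops f _
        exact congrArg _ (funext fun m => ih m v i)
  have hsat' : Models An E := by
    intro e he v
    apply Subtype.ext
    funext i
    rw [show (Term.eval An.ops v e.1).1 i = _ from evalc e.1 v i,
        show (Term.eval An.ops v e.2).1 i = _ from evalc e.2 v i]
    exact hsat e he _
  -- the two congruences
  set calA : Dn → Dn → Prop := fun u w => ∀ i : Fin n, i.val % 2 = 0 → u.1 i = w.1 i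
    with hcalA
  set cbeB : Dn → Dn → Prop := fun u w => ∀ i : Fin n, i.val % 2 = 1 → u.1 i = w.1 i
    with hcbeB
  have hcongA : IsCongruence An.ops calA := by
    refine ⟨⟨fun u i _ => rfl, fun h i hi => (h i hi).symm,
      fun h h' i hi => (h i hi).trans (h' i hi)⟩, ?_⟩
    intro f t t' ht i hi
    show ops f (fun m => (t m).1 i) = ops f (fun m => (t' m).1 i)
    exact congrArg _ (funext fun m => ht m i hi)
  have hcongB : IsCongruence An.ops cbeB := by
    refine ⟨⟨fun u i _ => rfl, fun h i hi => (h i hi).symm,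
      fun h h' i hi => (h i hi).trans (h' i hi)⟩, ?_⟩
    intro f t t' ht i hi
    show ops f (fun m => (t m).1 i) = ops f (fun m => (t' m).1 i)
    exact congrArg _ (funext fun m => ht m i hi)
  -- the staircase
  set vk : ℕ → Dn := fun k => ⟨fun i => decide (i.val < k), by
    intro i j hij
    intro hj
    simp only [decide_eq_true_eq] at hj ⊢
    omega⟩ with hvk
  have hvk1 : ∀ k (i : Fin n), (vk k).1 i = decide (i.val < k) := fun k i => rfl
  -- forward chain
  have hfwd : AltComp cbeB calA n (vk 0) (vk n) := by
    have hch : ChainP cbeB calA n (fun s => vk s) := by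
      intro s hs
      have key : ∀ i : Fin n, i.val ≠ s → (vk s).1 i = (vk (s+1)).1 i := by
        intro i hi
        rw [hvk1, hvk1]
        exact decide_eq_decide.mpr (by omega)
      rcases Nat.mod_two_eq_zero_or_one s with hp | hp
      · rw [if_pos hp]
        intro i hi
        exact key i (by omega)
      · rw [if_neg (by omega)]
        intro i hi
        exact key i (by omega)
    exact altcomp_of_chain hch
  -- backward chain is impossible
  have hbwd : ¬ AltComp calA cbeB n (vk 0) (vk n) := by
    intro hAC
    obtain ⟨c, hc0, hcn, hcP⟩ := chain_of_altcomp hAC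
    have inv : ∀ s, s ≤ n → ∀ i : Fin n, s ≤ i.val + 1 → (c s).1 i = false := by
      intro s
      induction s with
      | zero =>
          intro _ i _
          rw [hc0, hvk1]
          simp
      | succ s ih =>
          intro hs i hi
          by_contra hcon
          have htrue : (c (s+1)).1 i = true := by
            cases h' : (c (s+1)).1 i
            · exact absurd h' hcon
            · rfl
          have hsn : s < n := by
            have := i.isLt
            omega
          have hj2 : (c (s+1)).1 ⟨s, hsn⟩ = true :=
            (c (s+1)).2 ⟨s, hsn⟩ i (by simp [Fin.le_def]; omega) htrue
          have hj2' : (c s).1 ⟨s, hsn⟩ = false := ih (by omega) ⟨s, hsn⟩ (Nat.le_succ s)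
          have hstep := hcP s (by omega)
          rcases Nat.mod_two_eq_zero_or_one s with hp | hp
          · rw [if_pos hp] at hstep
            have := hstep ⟨s, hsn⟩ hp
            rw [hj2', hj2] at this
            exact absurd this (by simp)
          · rw [if_neg (by omega)] at hstep
            have := hstep ⟨s, hsn⟩ hp
            rw [hj2', hj2] at this
            exact absurd this (by simp)
    have hlast := inv n (le_refl n) ⟨n-1, by omega⟩ (by show n ≤ n-1+1; omega)
    rw [hcn, hvk1] at hlast
    simp only [decide_eq_false_iff_not] at hlast
    exact hlast (by omega)
  exact hbwd ((hperm An hsat' calA cbeB hcongA hcongB (vk 0) (vk n)).mpr hfwd)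

end AuxP1

section AuxJoinFinal

variable {F G : Type} {arF : F → ℕ} {arG : G → ℕ}

/-- Combined operations on a common domain. -/
def joinOps {D : Type} (oF : ∀ f : F, (Fin (arF f) → D) → D)
    (oG : ∀ g : G, (Fin (arG g) → D) → D) :
    ∀ fg : F ⊕ G, (Fin (Sum.elim arF arG fg) → D) → D :=
  fun fg => match fg with
  | .inl f => oF f
  | .inr g => oG g

lemma eval_sumInl {D : Type} (oF : ∀ f : F, (Fin (arF f) → D) → D)
    (oG : ∀ g : G, (Fin (arG g) → D) → D) (v : ℕ → D) (t : Term F arF ℕ) :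
    Term.eval (joinOps oF oG) v t.sumInl = t.eval oF v := by
  induction t with
  | var a => rfl
  | app f ch ih =>
      show joinOps oF oG (.inl f) (fun i => Term.eval (joinOps oF oG) v (ch i).sumInl) = _
      show oF f (fun i => Term.eval (joinOps oF oG) v (ch i).sumInl) = _
      exact congrArg _ (funext fun i => ih i)

lemma eval_sumInr {D : Type} (oF : ∀ f : F, (Fin (arF f) → D) → D)
    (oG : ∀ g : G, (Fin (arG g) → D) → D) (v : ℕ → D) (t : Term G arG ℕ) :
    Term.eval (joinOps oF oG) v t.sumInr = t.eval oG v := by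
  induction t with
  | var a => rfl
  | app g ch ih =>
      show joinOps oF oG (.inr g) (fun i => Term.eval (joinOps oF oG) v (ch i).sumInr) = _
      show oG g (fun i => Term.eval (joinOps oF oG) v (ch i).sumInr) = _
      exact congrArg _ (funext fun i => ih i)

end AuxJoinFinal
/-- part of Theorem 1.10. Let `V`, `W` be varieties in disjoint
signatures, each defined by identities of height at most 1. If neither is congruence
`n`-permutable for any `n ≥ 2`, then neither is their join `V ∨ W`. -/
theorem stmt3 {F G : Type} {arF : F → ℕ} {arG : G → ℕ}
    (EV : Set (Identity F arF)) (EW : Set (Identity G arG))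
    (hV1 : ∀ e ∈ EV, e.1.IsHeightLe1 ∧ e.2.IsHeightLe1)
    (hW1 : ∀ e ∈ EW, e.1.IsHeightLe1 ∧ e.2.IsHeightLe1)
    (hV : ∀ n, 2 ≤ n → ¬ CongNPermutable EV n)
    (hW : ∀ n, 2 ≤ n → ¬ CongNPermutable EW n) :
    ∀ n, 2 ≤ n → ¬ CongNPermutable (JoinIds EV EW) n := by
  intro n hn
  have hMV := opsB_models EV hV hV1
  have hMW := opsB_models EW hW hW1
  refine chain_model_not_perm (joinOps (opsB EV) (opsB EW)) ?_ (JoinIds EV EW) ?_ n hn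
  · intro h ε ε' hb
    cases h with
    | inl f => exact opsB_mono EV f ε ε' hb
    | inr g => exact opsB_mono EW g ε ε' hb
  · rintro e (⟨e', he', rfl⟩ | ⟨e', he', rfl⟩) v
    · show Term.eval (joinOps (opsB EV) (opsB EW)) v e'.1.sumInl
        = Term.eval (joinOps (opsB EV) (opsB EW)) v e'.2.sumInl
      rw [eval_sumInl, eval_sumInl]
      exact hMV e' he' v
    · show Term.eval (joinOps (opsB EV) (opsB EW)) v e'.1.sumInr
        = Term.eval (joinOps (opsB EV) (opsB EW)) v e'.2.sumInr
      rw [eval_sumInr, eval_sumInr]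
      exact hMW e' he' v
end

section
/- Let K be a class of relational structures. Then: (i) PpInt K ⊆ HomEq PpPower K; (ii) HomEq HomEq K = HomEq K; (iii) PpPower PpPower K = PpPower K; (iv) PpPower HomEq K ⊆ HomEq PpPower K. -/
/-! ### pp-interpretations and bundled relational structures -/

section PpInt

variable {σ : Type} {ar : σ → ℕ} {τ : Type} {br : τ → ℕ} {D E : Type}

/-- `SA` pp-interprets `SB`: there are `n ≥ 1` and a surjective partial map
`h : D^n → E` whose domain, the preimage of equality, and the preimages of all
relations of `SB` are pp-definable in `SA`. -/
def PpInterprets (SA : RelStruct σ ar D) (SB : RelStruct τ br E) : Prop :=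
  ∃ n : ℕ, 0 < n ∧ ∃ (Dom : Set (Fin n → D)) (h : (Fin n → D) → E),
    (∀ b : E, ∃ x ∈ Dom, h x = b) ∧
    PpDefinable SA (fun v : Fin n → D => v ∈ Dom) ∧
    PpDefinable SA (fun v : Fin 2 × Fin n → D =>
      (fun i => v (0, i)) ∈ Dom ∧ (fun i => v (1, i)) ∈ Dom ∧
        h (fun i => v (0, i)) = h (fun i => v (1, i))) ∧
    ∀ s : τ, PpDefinable SA (fun v : Fin (br s) × Fin n → D =>
      (∀ j, (fun i => v (j, i)) ∈ Dom) ∧ SB.rel s (fun j => h (fun i => v (j, i))))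

end PpInt

/-- A bundled relational structure (signature and domain included). -/
structure BStr : Type 1 where
  ι : Type
  ar : ι → ℕ
  D : Type
  str : RelStruct ι ar D

namespace BStr

/-- A homomorphism between bundled structures, along a renaming `e` of the signature
(preserving arities, witnessed by `har`). -/
def HomVia (A B : BStr) (e : A.ι → B.ι) (har : ∀ s, B.ar (e s) = A.ar s)
    (h : A.D → B.D) : Prop :=
  ∀ s t, A.str.rel s t → B.str.rel (e s) (fun i => h (t (Fin.cast (har s) i)))

/-- Homomorphic equivalence of bundled structures (up to renaming of the signature). -/
def HomEquivB (A B : BStr) : Prop :=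
  ∃ (e : A.ι ≃ B.ι) (har : ∀ s, B.ar (e s) = A.ar s)
    (har' : ∀ s, A.ar (e.symm s) = B.ar s),
    (∃ h, HomVia A B e har h) ∧ (∃ h, HomVia B A e.symm har' h)

/-- `HomEq K`: structures homomorphically equivalent to a member of `K`. -/
def HomEq (K : Set BStr) : Set BStr := { B | ∃ A ∈ K, HomEquivB A B }

/-- `PpPower K`: pp-powers of members of `K`. -/
def PpPower (K : Set BStr) : Set BStr := { B | ∃ A ∈ K, IsPpPower A.str B.str }

/-- `PpInt K`: structures pp-interpretable in some member of `K`. -/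
def PpInt (K : Set BStr) : Set BStr := { B | ∃ A ∈ K, PpInterprets A.str B.str }

end BStr

/-! ### Auxiliary machinery -/

namespace PPFormula

variable {σ : Type} {ar : σ → ℕ} {τ : Type} {br : τ → ℕ} {D E : Type}

theorem sat_ext (S : RelStruct σ ar D) {V : Type} (φ : PPFormula σ ar V) {v w : V → D}
    (h : ∀ x, v x = w x) : Sat S φ v ↔ Sat S φ w := by
  rw [show v = w from funext h]

/-- Renaming of variables. -/
def rename : {V W : Type} → (V → W) → PPFormula σ ar V → PPFormula σ ar W
  | _, _, ρ, .rel s t => .rel s (fun i => ρ (t i))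
  | _, _, ρ, .eq x y => .eq (ρ x) (ρ y)
  | _, _, ρ, .and φ ψ => .and (rename ρ φ) (rename ρ ψ)
  | _, _, ρ, .ex φ => .ex (rename (Option.map ρ) φ)

theorem sat_rename (S : RelStruct σ ar D) :
    ∀ {V W : Type} (ρ : V → W) (φ : PPFormula σ ar V) (v : W → D),
      Sat S (rename ρ φ) v ↔ Sat S φ (fun x => v (ρ x))
  | _, _, ρ, .rel s t, v => Iff.rfl
  | _, _, ρ, .eq x y, v => Iff.rfl
  | _, _, ρ, .and φ ψ, v => and_congr (sat_rename S ρ φ v) (sat_rename S ρ ψ v)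
  | _, _, ρ, .ex φ, v => by
      simp only [Sat]
      constructor
      · rintro ⟨d, hd⟩
        refine ⟨d, (sat_ext S φ ?_).mp ((sat_rename S (Option.map ρ) φ _).mp hd)⟩
        rintro (_ | x) <;> rfl
      · rintro ⟨d, hd⟩
        refine ⟨d, (sat_rename S (Option.map ρ) φ _).mpr ((sat_ext S φ ?_).mpr hd)⟩
        rintro (_ | x) <;> rfl

/-- Finite conjunction with a base formula. -/
def conjFin {V : Type} (base : PPFormula σ ar V) :
    (k : ℕ) → (Fin k → PPFormula σ ar V) → PPFormula σ ar V
  | 0, _ => base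
  | k + 1, f => .and (f 0) (conjFin base k (fun i => f i.succ))

theorem sat_conjFin (S : RelStruct σ ar D) {V : Type} (base : PPFormula σ ar V) :
    ∀ (k : ℕ) (f : Fin k → PPFormula σ ar V) (v : V → D),
      Sat S (conjFin base k f) v ↔ Sat S base v ∧ ∀ i, Sat S (f i) v
  | 0, f, v => by
      simp only [conjFin]
      exact ⟨fun h => ⟨h, fun i => i.elim0⟩, fun h => h.1⟩
  | k + 1, f, v => by
      simp only [conjFin, Sat, sat_conjFin S base k]
      rw [Fin.forall_fin_succ]
      tauto

/-- Existential quantification over `Fin k` many extra variables. -/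
def exFin : (k : ℕ) → {V : Type} → PPFormula σ ar (V ⊕ Fin k) → PPFormula σ ar V
  | 0, _, ψ => rename (Sum.elim id Fin.elim0) ψ
  | k + 1, _, ψ => .ex (exFin k (rename
      (fun p => Sum.elim (fun x => Sum.inl (some x))
        (fun i : Fin (k + 1) => Fin.cases (Sum.inl none) (fun j => Sum.inr j) i) p) ψ))

theorem sat_exFin (S : RelStruct σ ar D) :
    ∀ (k : ℕ) {V : Type} (ψ : PPFormula σ ar (V ⊕ Fin k)) (v : V → D),
      Sat S (exFin k ψ) v ↔ ∃ d : Fin k → D, Sat S ψ (Sum.elim v d)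
  | 0, _, ψ, v => by
      rw [exFin, sat_rename]
      constructor
      · intro h
        refine ⟨Fin.elim0, (sat_ext S ψ ?_).mp h⟩
        rintro (x | i)
        · rfl
        · exact i.elim0
      · rintro ⟨d, hd⟩
        refine (sat_ext S ψ ?_).mp hd
        rintro (x | i)
        · rfl
        · exact i.elim0
  | k + 1, _, ψ, v => by
      rw [exFin]
      simp only [Sat]
      constructor
      · rintro ⟨d0, hd0⟩
        obtain ⟨d', hd'⟩ := (sat_exFin S k _ _).mp hd0
        rw [sat_rename] at hd'
        refine ⟨Fin.cons d0 d', (sat_ext S ψ ?_).mp hd'⟩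
        rintro (x | i)
        · rfl
        · refine Fin.cases ?_ (fun j => ?_) i <;> simp
      · rintro ⟨d, hd⟩
        refine ⟨d 0, (sat_exFin S k _ _).mpr ⟨fun j => d j.succ, ?_⟩⟩
        rw [sat_rename]
        refine (sat_ext S ψ ?_).mpr hd
        rintro (x | i)
        · rfl
        · refine Fin.cases ?_ (fun j => ?_) i <;> simp

/-- Renaming of the signature along an arity-preserving map. -/
def sigMap (ε : τ → σ) (hε : ∀ s, ar (ε s) = br s) :
    {V : Type} → PPFormula τ br V → PPFormula σ ar V
  | _, .rel s t => .rel (ε s) (fun i => t (Fin.cast (hε s) i))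
  | _, .eq x y => .eq x y
  | _, .and φ ψ => .and (sigMap ε hε φ) (sigMap ε hε ψ)
  | _, .ex φ => .ex (sigMap ε hε φ)

theorem sat_sigMap_mp (S : RelStruct σ ar D) (T : RelStruct τ br E) (ε : τ → σ)
    (hε : ∀ s, ar (ε s) = br s) (h : D → E)
    (hh : ∀ (s : τ) (t : Fin (ar (ε s)) → D), S.rel (ε s) t →
      T.rel s (fun i => h (t (Fin.cast (hε s).symm i)))) :
    ∀ {V : Type} (φ : PPFormula τ br V) (v : V → D),
      Sat S (sigMap ε hε φ) v → Sat T φ (fun x => h (v x))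
  | _, .rel s t, v, hs => hh s _ hs
  | _, .eq x y, v, hs => congrArg h hs
  | _, .and φ ψ, v, hs =>
      ⟨sat_sigMap_mp S T ε hε h hh φ v hs.1, sat_sigMap_mp S T ε hε h hh ψ v hs.2⟩
  | _, .ex φ, v, hs => by
      obtain ⟨d, hd⟩ := hs
      refine ⟨h d, (sat_ext T φ ?_).mp (sat_sigMap_mp S T ε hε h hh φ _ hd)⟩
      rintro (_ | x) <;> rfl

theorem sat_sigMap_mpr (S : RelStruct σ ar D) (T : RelStruct τ br E) (ε : τ → σ)
    (hε : ∀ s, ar (ε s) = br s) (h : E → D)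
    (hh : ∀ (s : τ) (t : Fin (br s) → E), T.rel s t →
      S.rel (ε s) (fun i => h (t (Fin.cast (hε s) i)))) :
    ∀ {V : Type} (φ : PPFormula τ br V) (v : V → E),
      Sat T φ v → Sat S (sigMap ε hε φ) (fun x => h (v x))
  | _, .rel s t, v, hs => hh s _ hs
  | _, .eq x y, v, hs => congrArg h hs
  | _, .and φ ψ, v, hs =>
      ⟨sat_sigMap_mpr S T ε hε h hh φ v hs.1, sat_sigMap_mpr S T ε hε h hh ψ v hs.2⟩
  | _, .ex φ, v, hs => by
      obtain ⟨d, hd⟩ := hs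
      refine ⟨h d, (sat_ext S (sigMap ε hε φ) ?_).mp (sat_sigMap_mpr S T ε hε h hh φ _ hd)⟩
      rintro (_ | x) <;> rfl

/-- The substitution lemma: a relation pp-definable in a pp-power (on the full domain)
is, in its `n`-fold reading, pp-definable in the base structure. -/
theorem subst (SA : RelStruct σ ar D) (SB : RelStruct τ br E) (n : ℕ) (hn : 0 < n)
    (e : E ≃ (Fin n → D)) (ψ : ∀ s : τ, PPFormula σ ar (Fin (br s) × Fin n))
    (hψ : ∀ s v, SB.rel s (fun j => e.symm (fun i => v (j, i))) ↔ Sat SA (ψ s) v) :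
    ∀ {V : Type} (φ : PPFormula τ br V), ∃ χ : PPFormula σ ar (V × Fin n),
      ∀ v : V × Fin n → D, Sat SB φ (fun x => e.symm (fun i => v (x, i))) ↔ Sat SA χ v := by
  intro V φ
  induction φ with
  | rel s t =>
      refine ⟨rename (fun p => (t p.1, p.2)) (ψ s), fun v => ?_⟩
      rw [sat_rename]
      exact hψ s (fun p => v (t p.1, p.2))
  | eq x y =>
      refine ⟨conjFin (.eq (x, ⟨0, hn⟩) (x, ⟨0, hn⟩)) n (fun i => .eq (x, i) (y, i)),
        fun v => ?_⟩
      rw [sat_conjFin]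
      simp only [Sat]
      rw [EmbeddingLike.apply_eq_iff_eq, funext_iff]
      tauto
  | and φ₁ φ₂ ih₁ ih₂ =>
      obtain ⟨χ₁, h₁⟩ := ih₁
      obtain ⟨χ₂, h₂⟩ := ih₂
      exact ⟨.and χ₁ χ₂, fun v => and_congr (h₁ v) (h₂ v)⟩
  | ex φ ih =>
      obtain ⟨χ', hχ'⟩ := ih
      refine ⟨exFin n (rename
        (fun p : Option _ × Fin n => Option.elim p.1 (Sum.inr p.2) (fun x => Sum.inl (x, p.2)))
        χ'), fun v => ?_⟩
      rw [sat_exFin]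
      simp only [Sat]
      constructor
      · rintro ⟨d, hd⟩
        refine ⟨e d, ?_⟩
        rw [sat_rename]
        refine (hχ' _).mp ((sat_ext SB φ ?_).mp hd)
        rintro (_ | x)
        · exact (e.symm_apply_apply d).symm
        · rfl
      · rintro ⟨ds, hds⟩
        rw [sat_rename] at hds
        refine ⟨e.symm ds, (sat_ext SB φ ?_).mpr ((hχ' _).mpr hds)⟩
        rintro (_ | x) <;> rfl

end PPFormula

section AuxRel

variable {σ : Type} {ar : σ → ℕ} {D : Type}

theorem isPpPower_refl (S : RelStruct σ ar D) : IsPpPower S S := by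
  refine ⟨1, one_pos, (Equiv.funUnique (Fin 1) D).symm, fun s => ?_⟩
  exact ⟨.rel s (fun j => (j, 0)), fun v => Iff.rfl⟩

theorem rel_transport {S : RelStruct σ ar D} {s s' : σ} (hss : s = s')
    {t : Fin (ar s) → D} (h : S.rel s t) :
    S.rel s' (fun i => t ⟨i.1, by rw [hss]; exact i.2⟩) := by
  subst hss; exact h

end AuxRel

namespace BStr

theorem homEquivB_refl (A : BStr) : HomEquivB A A :=
  ⟨Equiv.refl _, fun _ => rfl, fun _ => rfl,
    ⟨id, fun s t h => h⟩, ⟨id, fun s t h => h⟩⟩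

theorem homVia_trans {A B C : BStr} {e₁ : A.ι → B.ι} {e₂ : B.ι → C.ι}
    {har₁ : ∀ s, B.ar (e₁ s) = A.ar s} {har₂ : ∀ s, C.ar (e₂ s) = B.ar s}
    {h₁ : A.D → B.D} {h₂ : B.D → C.D}
    (H₁ : HomVia A B e₁ har₁ h₁) (H₂ : HomVia B C e₂ har₂ h₂) :
    HomVia A C (fun s => e₂ (e₁ s)) (fun s => (har₂ (e₁ s)).trans (har₁ s))
      (fun x => h₂ (h₁ x)) := by
  intro s t h
  exact H₂ (e₁ s) _ (H₁ s t h)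

theorem homEquivB_trans {A B C : BStr} (h₁ : HomEquivB A B) (h₂ : HomEquivB B C) :
    HomEquivB A C := by
  obtain ⟨e₁, har₁, har₁', ⟨f₁, hf₁⟩, ⟨g₁, hg₁⟩⟩ := h₁
  obtain ⟨e₂, har₂, har₂', ⟨f₂, hf₂⟩, ⟨g₂, hg₂⟩⟩ := h₂
  exact ⟨e₁.trans e₂, fun s => (har₂ (e₁ s)).trans (har₁ s),
    fun s => (har₁' (e₂.symm s)).trans (har₂' s),
    ⟨fun x => f₂ (f₁ x), homVia_trans hf₁ hf₂⟩,
    ⟨fun x => g₁ (g₂ x), homVia_trans hg₂ hg₁⟩⟩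

end BStr

open BStr in
/-- Lemma 3.5 of the paper. For any class `K` of relational
structures: (i) `PpInt K ⊆ HomEq PpPower K`; (ii) `HomEq HomEq K = HomEq K`;
(iii) `PpPower PpPower K = PpPower K`; (iv) `PpPower HomEq K ⊆ HomEq PpPower K`. -/
theorem stmt6 (K : Set BStr) :
    PpInt K ⊆ HomEq (PpPower K) ∧
    HomEq (HomEq K) = HomEq K ∧
    PpPower (PpPower K) = PpPower K ∧
    PpPower (HomEq K) ⊆ HomEq (PpPower K) := by
  refine ⟨?_, ?_, ?_, ?_⟩
  · -- (i) PpInt K ⊆ HomEq (PpPower K)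
    rintro B ⟨A, hA, n, hn, Dom, hmap, hsurj, -, -, hrel⟩
    set SC : RelStruct B.ι B.ar (Fin n → A.D) :=
      ⟨fun s w => (∀ j, w j ∈ Dom) ∧ B.str.rel s (fun j => hmap (w j))⟩ with hSC
    refine ⟨⟨B.ι, B.ar, Fin n → A.D, SC⟩, ⟨A, hA, n, hn, Equiv.refl _, fun s => hrel s⟩, ?_⟩
    choose g hg1 hg2 using hsurj
    refine ⟨Equiv.refl _, fun _ => rfl, fun _ => rfl, ⟨hmap, fun s w hw => hw.2⟩,
      ⟨g, fun s t ht => ⟨fun j => hg1 _, ?_⟩⟩⟩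
    show B.str.rel s fun j => hmap (g (t j))
    have : (fun j => hmap (g (t j))) = t := funext fun j => hg2 _
    rw [this]; exact ht
  · -- (ii) HomEq (HomEq K) = HomEq K
    ext B
    constructor
    · rintro ⟨M, ⟨A, hA, hAM⟩, hMB⟩
      exact ⟨A, hA, homEquivB_trans hAM hMB⟩
    · intro hB
      exact ⟨B, hB, homEquivB_refl B⟩
  · -- (iii) PpPower (PpPower K) = PpPower K
    ext B
    constructor
    · rintro ⟨M, ⟨A, hA, n, hn, e, hMA⟩, m, hm, f, hBM⟩
      refine ⟨A, hA, m * n, Nat.mul_pos hm hn, ?_⟩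
      choose ψ hψ using hMA
      let gg : B.D ≃ (Fin (m * n) → A.D) :=
        { toFun := fun b p => e (f b (finProdFinEquiv.symm p).1) (finProdFinEquiv.symm p).2
          invFun := fun w => f.symm (fun k => e.symm (fun i => w (finProdFinEquiv (k, i))))
          left_inv := by intro b; simp
          right_inv := by
            intro w; funext p
            simp only [Equiv.apply_symm_apply, Prod.mk.eta] }
      refine ⟨gg, fun u => ?_⟩
      obtain ⟨φu, hφu⟩ := hBM u
      obtain ⟨χ, hχ⟩ := PPFormula.subst A.str M.str n hn e ψ (fun s v => hψ s v) φu
      refine ⟨PPFormula.rename (fun p => (p.1.1, finProdFinEquiv (p.1.2, p.2))) χ, fun v => ?_⟩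
      rw [PPFormula.sat_rename]
      exact (hφu (fun x => e.symm (fun i => v (x.1, finProdFinEquiv (x.2, i))))).trans
        (hχ (fun p => v (p.1.1, finProdFinEquiv (p.1.2, p.2))))
    · rintro ⟨A, hA, hAB⟩
      exact ⟨A, ⟨A, hA, isPpPower_refl A.str⟩, hAB⟩
  · -- (iv) PpPower (HomEq K) ⊆ HomEq (PpPower K)
    rintro B ⟨A', ⟨A, hA, eqv, har, har', ⟨h₁, hh₁⟩, ⟨h₂, hh₂⟩⟩, n, hn, eq', hrel⟩
    choose φ hφ using hrel
    set SC : RelStruct B.ι B.ar (Fin n → A.D) :=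
      ⟨fun s w => PPFormula.Sat A.str (PPFormula.sigMap eqv.symm har' (φ s))
        (fun p => w p.1 p.2)⟩ with hSC
    refine ⟨⟨B.ι, B.ar, Fin n → A.D, SC⟩,
      ⟨A, hA, n, hn, Equiv.refl _, fun s => ⟨PPFormula.sigMap eqv.symm har' (φ s),
        fun v => Iff.rfl⟩⟩, Equiv.refl _, fun _ => rfl, fun _ => rfl, ?_, ?_⟩
    · -- hom from SC to B
      refine ⟨fun w => eq'.symm (fun i => h₁ (w i)), fun s w hw => ?_⟩
      have key : ∀ (s' : A'.ι) (t : Fin (A.ar (eqv.symm s')) → A.D),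
          A.str.rel (eqv.symm s') t →
          A'.str.rel s' (fun i => h₁ (t (Fin.cast (har' s').symm i))) := by
        intro s' t ht
        exact rel_transport (eqv.apply_symm_apply s') (hh₁ (eqv.symm s') t ht)
      have := PPFormula.sat_sigMap_mp A.str A'.str eqv.symm har' h₁ key (φ s)
        (fun p => w p.1 p.2) hw
      exact (hφ s (fun p => h₁ (w p.1 p.2))).mpr this
    · -- hom from B to SC
      refine ⟨fun b i => h₂ (eq' b i), fun s t ht => ?_⟩
      have h0 : B.str.rel s (fun j => eq'.symm (fun i => eq' (t j) i)) := by
        have : (fun j => eq'.symm (fun i => eq' (t j) i)) = t :=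
          funext fun j => eq'.symm_apply_apply (t j)
        rw [this]; exact ht
      have h1 := (hφ s (fun p => eq' (t p.1) p.2)).mp h0
      exact PPFormula.sat_sigMap_mpr A.str A'.str eqv.symm har' h₂ hh₂ (φ s)
        (fun p => eq' (t p.1) p.2) h1
end

section
/- Let A be an at most countable ω-categorical relational structure which is a model-complete core, and let B be the structure obtained from A by adding a singleton unary relation {s} for some element s of A. Then B is homomorphically equivalent to a pp-power of A. -/
/-- The expansion of a relational structure by singleton unary relations `{cs i}`
(the `i`-th added relation has arity 1 and contains exactly the tuple `(cs i)`). -/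
def addSingletons {σ : Type} {ar : σ → ℕ} {C : Type} (S : RelStruct σ ar C)
    {k : ℕ} (cs : Fin k → C) :
    RelStruct (σ ⊕ Fin k) (Sum.elim ar (fun _ => 1)) C where
  rel := fun s => match s with
    | .inl s => fun t => S.rel s t
    | .inr i => fun t => ∀ j, t j = cs i

/-!
ω-categoricity leaves only finitely many pp-definable relations of each arity, so the set of
tuples whose pp-type contains that of a given tuple is itself pp-definable. Extending partial maps
step by step along an enumeration of the countable domain turns such a pp-type inclusion into an
endomorphism, and in a model-complete core into an automorphism: orbits are pp-definable.
Once the orbit `O` of `s` is pp-definable, the pp-power on pairs `(x, y)` carrying the relations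
of `A` on first coordinates with constant second coordinate, and the unary relation
`{(x, x) | x ∈ O}`, is homomorphically equivalent to `(A, {s})`: use `x ↦ (x, s)` one way and
`(x, y) ↦ α_y⁻¹ x`, for an automorphism `α_y` sending `s` to `y`, the other way.
-/

variable {σ : Type} {ar : σ → ℕ} {D E : Type}

namespace PPFormula

def relabel : {V W : Type} → (V → W) → PPFormula σ ar V → PPFormula σ ar W
  | _, _, f, .rel s t => .rel s (f ∘ t)
  | _, _, f, .eq x y => .eq (f x) (f y)
  | _, _, f, .and φ ψ => .and (relabel f φ) (relabel f ψ)
  | _, _, f, .ex φ => .ex (relabel (Option.map f) φ)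

theorem sat_relabel (S : RelStruct σ ar D) :
    ∀ {V W : Type} (f : V → W) (φ : PPFormula σ ar V) (v : W → D),
      Sat S (relabel f φ) v ↔ Sat S φ (v ∘ f)
  | _, _, _, .rel _ _, _ => Iff.rfl
  | _, _, _, .eq _ _, _ => Iff.rfl
  | _, _, f, .and φ ψ, v => and_congr (sat_relabel S f φ v) (sat_relabel S f ψ v)
  | _, _, f, .ex φ, v => exists_congr fun d => by
      rw [sat_relabel S (Option.map f) φ]
      congr! 1
      funext o
      cases o <;> rfl

theorem Sat.comp_of_isHomOf {S : RelStruct σ ar D} {T : RelStruct σ ar E} {h : D → E}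
    (hh : IsHomOf S T h) :
    ∀ {V : Type} {φ : PPFormula σ ar V} {v : V → D}, Sat S φ v → Sat T φ (h ∘ v)
  | _, .rel s _, _, hs => hh s _ hs
  | _, .eq _ _, _, he => congrArg h he
  | _, .and _ _, _, hs => ⟨hs.1.comp_of_isHomOf hh, hs.2.comp_of_isHomOf hh⟩
  | _, .ex _, v, hs => by
      obtain ⟨d, hd⟩ := hs
      refine ⟨h d, ?_⟩
      convert hd.comp_of_isHomOf hh using 1
      funext o
      cases o <;> rfl

end PPFormula

namespace PpDefinable

variable {S : RelStruct σ ar D} {V W : Type} {R R' : (V → D) → Prop}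

theorem of_iff (h : PpDefinable S R) (hRR' : ∀ v, R v ↔ R' v) : PpDefinable S R' :=
  let ⟨φ, hφ⟩ := h
  ⟨φ, fun v => (hRR' v).symm.trans (hφ v)⟩

theorem rel (s : σ) : PpDefinable S (S.rel s) :=
  ⟨.rel s id, fun _ => Iff.rfl⟩

theorem eq (x y : V) : PpDefinable S (fun v : V → D => v x = v y) :=
  ⟨.eq x y, fun _ => Iff.rfl⟩

theorem and (h : PpDefinable S R) (h' : PpDefinable S R') :
    PpDefinable S (fun v => R v ∧ R' v) :=
  let ⟨φ, hφ⟩ := h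
  let ⟨ψ, hψ⟩ := h'
  ⟨.and φ ψ, fun v => and_congr (hφ v) (hψ v)⟩

theorem exists_option {R : (Option V → D) → Prop} (h : PpDefinable S R) :
    PpDefinable S (fun v : V → D => ∃ d, R (fun o => o.elim d v)) :=
  let ⟨φ, hφ⟩ := h
  ⟨.ex φ, fun _ => exists_congr fun _ => hφ _⟩

theorem comp (h : PpDefinable S R) (f : V → W) : PpDefinable S (fun v : W → D => R (v ∘ f)) :=
  let ⟨φ, hφ⟩ := h
  ⟨φ.relabel f, fun v => (hφ _).trans (PPFormula.sat_relabel S f φ v).symm⟩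

theorem apply_comp {h : D → D} (hR : PpDefinable S R) (hh : IsHomOf S S h) {v : V → D}
    (hv : R v) : R (h ∘ v) :=
  let ⟨_, hφ⟩ := hR
  (hφ _).2 (((hφ v).1 hv).comp_of_isHomOf hh)

theorem forall_mem_finset [Nonempty D] {ι : Type} {R : ι → (V → D) → Prop} (s : Finset ι)
    (h : ∀ i ∈ s, PpDefinable S (R i)) : PpDefinable S (fun v => ∀ i ∈ s, R i v) := by
  classical
  induction s using Finset.induction_on with
  | empty => exact ⟨.ex (.eq none none), fun v => by simp [PPFormula.Sat]⟩
  | insert i s _ ih =>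
    refine ((h i (Finset.mem_insert_self i s)).and
      (ih fun j hj => h j (Finset.mem_insert_of_mem hj))).of_iff fun v => ?_
    simp only [Finset.mem_insert, forall_eq_or_imp]

theorem forall_of_finite [Nonempty D] {ι : Type} [Finite ι] {R : ι → (V → D) → Prop}
    (h : ∀ i, PpDefinable S (R i)) : PpDefinable S (fun v => ∀ i, R i v) := by
  have := Fintype.ofFinite ι
  simpa using forall_mem_finset Finset.univ fun i _ => h i

theorem exists_snoc {k : ℕ} {R : (Fin (k + 1) → D) → Prop} (h : PpDefinable S R) :
    PpDefinable S (fun v : Fin k → D => ∃ y, R (Fin.snoc v y)) :=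
  (h.comp (Fin.snoc some none)).exists_option.of_iff fun v => exists_congr fun y => by
    rw [Fin.comp_snoc]
    rfl

end PpDefinable

def autOrbit (S : RelStruct σ ar D) {V : Type} (t : V → D) : Set (V → D) :=
  { u | ∃ g : D ≃ D, IsAutomorphism S g ∧ (fun i => g (t i)) = u }

theorem isAutomorphism_refl (S : RelStruct σ ar D) : IsAutomorphism S (Equiv.refl D) :=
  ⟨fun _ _ h => h, fun _ _ h => h⟩

theorem mem_autOrbit_self (S : RelStruct σ ar D) {V : Type} (t : V → D) : t ∈ autOrbit S t :=
  ⟨Equiv.refl D, isAutomorphism_refl S, rfl⟩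

theorem OmegaCategorical.finite_setOf_ppDefinable {S : RelStruct σ ar D}
    (hcat : OmegaCategorical S) (k : ℕ) :
    {R : Set (Fin k → D) | PpDefinable S R}.Finite := by
  set orbits := {O : Set (Fin k → D) | ∃ t, O = autOrbit S t}
  have hunion : ∀ R ∈ {R : Set (Fin k → D) | PpDefinable S R},
      R = ⋃₀ {O ∈ orbits | O ⊆ R} := by
    intro R hR
    refine Set.Subset.antisymm (fun v hv => ?_) fun v ⟨O, ⟨_, hOR⟩, hvO⟩ => hOR hvO
    refine ⟨autOrbit S v, ⟨⟨v, rfl⟩, ?_⟩, mem_autOrbit_self S v⟩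
    rintro _ ⟨g, hg, rfl⟩
    exact PpDefinable.apply_comp hR hg.1 hv
  refine Set.Finite.of_finite_image (f := fun R => {O ∈ orbits | O ⊆ R}) ?_ fun R hR R' hR' h =>
    (hunion R hR).trans ((congrArg Set.sUnion h).trans (hunion R' hR').symm)
  exact (hcat k).finite_subsets.subset (Set.image_subset_iff.2 fun _ _ _ hO => hO.1)

def PpEntails (S : RelStruct σ ar D) {V : Type} (t u : V → D) : Prop :=
  ∀ φ : PPFormula σ ar V, PPFormula.Sat S φ t → PPFormula.Sat S φ u

section PpEntails

variable {S : RelStruct σ ar D} {V W : Type} {t u : V → D}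

theorem ppEntails_refl (t : V → D) : PpEntails S t t :=
  fun _ => id

theorem ppEntails_comp_of_isHomOf {h : D → D} (hh : IsHomOf S S h) (t : V → D) :
    PpEntails S t (h ∘ t) :=
  fun _ hφ => hφ.comp_of_isHomOf hh

theorem PpEntails.apply (h : PpEntails S t u) {R : (V → D) → Prop} (hR : PpDefinable S R)
    (ht : R t) : R u :=
  let ⟨φ, hφ⟩ := hR
  (hφ u).2 (h φ ((hφ t).1 ht))

theorem PpEntails.comp (h : PpEntails S t u) (f : W → V) : PpEntails S (t ∘ f) (u ∘ f) :=
  fun φ hφ => (PPFormula.sat_relabel S f φ u).1 (h _ ((PPFormula.sat_relabel S f φ t).2 hφ))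

end PpEntails

theorem exists_isHomOf_of_forall_ppEntails {S : RelStruct σ ar D} {d c : ℕ → D}
    (hd : Function.Surjective d)
    (h : ∀ n, PpEntails S (fun i : Fin n => d i) (fun i : Fin n => c i)) :
    ∃ e : D → D, IsHomOf S S e ∧ ∀ i, e (d i) = c i := by
  have hfin : ∀ {W : Type} [Finite W] (f : W → ℕ), PpEntails S (d ∘ f) (c ∘ f) := by
    intro W _ f
    obtain ⟨N, hN⟩ := (Set.finite_range f).bddAbove
    exact (h (N + 1)).comp fun w => ⟨f w, Nat.lt_succ_of_le (hN ⟨w, rfl⟩)⟩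
  choose idx hidx using hd
  refine ⟨c ∘ idx, fun r t ht => ?_, fun i => ?_⟩
  · refine (hfin (idx ∘ t)).apply (PpDefinable.rel r) ?_
    simpa only [← Function.comp_assoc, Function.comp_def, hidx] using ht
  · simpa using (hfin ![idx (d i), i]).apply (PpDefinable.eq 0 1) (by simp [hidx])

namespace OmegaCategorical

variable {S : RelStruct σ ar D} [Nonempty D] (hcat : OmegaCategorical S)
include hcat

theorem ppDefinable_ppEntails {k : ℕ} (t : Fin k → D) : PpDefinable S (PpEntails S t) := by
  set F := {R : Set (Fin k → D) | PpDefinable S R ∧ t ∈ R}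
  have : Finite F := ((hcat.finite_setOf_ppDefinable k).subset fun _ hR => hR.1).to_subtype
  refine (PpDefinable.forall_of_finite (R := fun (R : F) v => v ∈ (R : Set (Fin k → D)))
    fun R => R.2.1).of_iff fun u => ⟨fun hu φ hφ => hu ⟨{v | PPFormula.Sat S φ v},
      ⟨φ, fun _ => Iff.rfl⟩, hφ⟩, fun hu R => hu.apply R.2.1 R.2.2⟩

theorem exists_ppEntails_snoc {k : ℕ} {t u : Fin k → D} (h : PpEntails S t u) (x : D) :
    ∃ y, PpEntails S (Fin.snoc t x : Fin (k + 1) → D) (Fin.snoc u y) :=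
  h.apply (R := fun v => ∃ y, PpEntails S (Fin.snoc t x : Fin (k + 1) → D) (Fin.snoc v y))
    (hcat.ppDefinable_ppEntails _).exists_snoc ⟨x, ppEntails_refl _⟩

theorem exists_forall_ppEntails (d : ℕ → D) {n₀ : ℕ} {c₀ : ℕ → D}
    (h₀ : PpEntails S (fun i : Fin n₀ => d i) (fun i : Fin n₀ => c₀ i)) :
    ∃ c : ℕ → D, (∀ n, PpEntails S (fun i : Fin n => d i) (fun i : Fin n => c i)) ∧
      ∀ i < n₀, c i = c₀ i := by
  have step : ∀ n (c : ℕ → D), PpEntails S (fun i : Fin n => d i) (fun i : Fin n => c i) →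
      ∃ y, PpEntails S (fun i : Fin (n + 1) => d i)
        (fun i : Fin (n + 1) => Function.update c n y i) := by
    intro n c hc
    obtain ⟨y, hy⟩ := hcat.exists_ppEntails_snoc hc (d n)
    refine ⟨y, ?_⟩
    convert hy using 1 <;> funext i <;> induction i using Fin.lastCases with
      | last => simp
      | cast j => simp [Function.update_of_ne j.isLt.ne]
  choose! next hnext using step
  let seq : ℕ → ℕ → D := fun k =>
    Nat.rec c₀ (fun k c => Function.update c (n₀ + k) (next (n₀ + k) c)) k
  have hseq : ∀ k, PpEntails S (fun i : Fin (n₀ + k) => d i) (fun i => seq k i) := by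
    intro k
    induction k with
    | zero => exact h₀
    | succ k ih => exact hnext _ _ ih
  have hstable : ∀ k m i, i < n₀ + k → k ≤ m → seq m i = seq k i := by
    intro k m i hi hkm
    induction m, hkm using Nat.le_induction with
    | base => rfl
    | succ m _ ih => exact (Function.update_of_ne (by omega) _ _).trans ih
  refine ⟨fun i => seq (i + 1) i, fun n => ?_, fun i hi => hstable 0 (i + 1) i hi (by omega)⟩
  have hprefix : (fun i : Fin n => seq (i + 1) i) =
      (fun i : Fin (n₀ + n) => seq n i) ∘ Fin.castLE (Nat.le_add_left n n₀) :=
    funext fun i => (hstable (i + 1) n i (by omega) i.2).symm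
  rw [hprefix]
  exact (hseq n).comp (Fin.castLE (Nat.le_add_left n n₀))

theorem exists_isHomOf_comp_eq [Countable D] {k : ℕ} {t u : Fin k → D} (h : PpEntails S t u) :
    ∃ e : D → D, IsHomOf S S e ∧ e ∘ t = u := by
  obtain ⟨f, hf⟩ := exists_surjective_nat D
  let d : ℕ → D := fun i => if hi : i < k then t ⟨i, hi⟩ else f (i - k)
  have hd : Function.Surjective d := fun x => by
    obtain ⟨m, rfl⟩ := hf x
    exact ⟨m + k, by simp [d]⟩
  obtain ⟨c, hc, hcu⟩ := hcat.exists_forall_ppEntails d (n₀ := k)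
    (c₀ := fun i => if hi : i < k then u ⟨i, hi⟩ else Classical.arbitrary D)
    (by simpa [d] using h)
  obtain ⟨e, he, hec⟩ := exists_isHomOf_of_forall_ppEntails hd hc
  refine ⟨e, he, funext fun i => ?_⟩
  simpa [d, hcu i i.2] using hec i

theorem ppDefinable_autOrbit [Countable D] (hmc : ModelCompleteCore S) {k : ℕ} (t : Fin k → D) :
    PpDefinable S (autOrbit S t) := by
  refine (hcat.ppDefinable_ppEntails t).of_iff fun u => ⟨fun h => ?_, ?_⟩
  · obtain ⟨e, he, rfl⟩ := hcat.exists_isHomOf_comp_eq h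
    obtain ⟨g, hg, hge⟩ := hmc e he (Set.range t) (Set.finite_range t)
    exact ⟨g, hg, funext fun i => hge _ ⟨i, rfl⟩⟩
  · rintro ⟨g, hg, rfl⟩
    exact ppEntails_comp_of_isHomOf hg.1 t

end OmegaCategorical

section OrbitPairPower

variable (S : RelStruct σ ar D) (s : D)

def orbitPairPower : RelStruct (σ ⊕ Fin 1) (Sum.elim ar fun _ => 1) (Fin 2 → D) where
  rel
    | .inl r => fun t => S.rel r (fun j => t j 0) ∧ ∃ y, ∀ j, t j 1 = y
    | .inr _ => fun (t : Fin 1 → Fin 2 → D) =>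
        t 0 0 = t 0 1 ∧ (fun _ => t 0 0) ∈ autOrbit S (fun _ : Fin 1 => s)

variable {S s} in
theorem isPpPower_orbitPairPower (hO : PpDefinable S (autOrbit S fun _ : Fin 1 => s)) :
    IsPpPower S (orbitPairPower S s) := by
  have : Nonempty D := ⟨s⟩
  refine ⟨2, two_pos, Equiv.refl _, ?_⟩
  rintro (r | i)
  · exact ((PpDefinable.rel r).comp fun j => (j, 0)).and
      (PpDefinable.forall_of_finite fun j => PpDefinable.eq (some (j, 1)) none).exists_option
  · exact (PpDefinable.eq ((0 : Fin 1), (0 : Fin 2)) (0, 1)).and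
      (hO.comp fun _ => ((0 : Fin 1), (0 : Fin 2)))

theorem isHomOf_addSingletons_orbitPairPower :
    IsHomOf (addSingletons S fun _ : Fin 1 => s) (orbitPairPower S s) (fun x => ![x, s]) := by
  rintro (r | i) t ht
  · exact ⟨ht, s, fun _ => rfl⟩
  change Fin 1 → D at t
  have ht0 : t 0 = s := ht (0 : Fin 1)
  refine ⟨by simp [ht0], ?_⟩
  simpa [ht0] using mem_autOrbit_self S (fun _ : Fin 1 => s)

theorem exists_isHomOf_orbitPairPower_addSingletons :
    ∃ h, IsHomOf (orbitPairPower S s) (addSingletons S fun _ : Fin 1 => s) h := by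
  have : ∀ y : D, ∃ g : D ≃ D, IsAutomorphism S g ∧
      ((fun _ => y) ∈ autOrbit S (fun _ : Fin 1 => s) → g s = y) := by
    intro y
    by_cases hy : (fun _ => y) ∈ autOrbit S (fun _ : Fin 1 => s)
    · obtain ⟨g, hg, hgs⟩ := hy
      exact ⟨g, hg, fun _ => congrFun hgs 0⟩
    · exact ⟨Equiv.refl D, isAutomorphism_refl S, fun h => absurd h hy⟩
  choose α hα hαs using this
  refine ⟨fun p => (α (p 1)).symm (p 0), ?_⟩
  rintro (r | i) t ⟨ht, hts⟩
  · obtain ⟨y, hy⟩ := hts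
    simp only [hy]
    exact (hα y).2 r _ ht
  · change Fin 1 → Fin 2 → D at t
    intro (j : Fin 1)
    obtain rfl := Subsingleton.elim j 0
    show (α (t 0 1)).symm (t 0 0) = s
    rw [← ht, Equiv.symm_apply_eq, hαs _ hts]

variable {S s} in
theorem homEqPpPower_addSingletons_of_ppDefinable_autOrbit
    (hO : PpDefinable S (autOrbit S fun _ : Fin 1 => s)) :
    HomEqPpPower S (addSingletons S fun _ : Fin 1 => s) :=
  ⟨_, orbitPairPower S s, isPpPower_orbitPairPower hO,
    ⟨_, isHomOf_addSingletons_orbitPairPower S s⟩,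
    exists_isHomOf_orbitPairPower_addSingletons S s⟩

end OrbitPairPower

/-- Lemma 3.6 of the paper. Let `SA` be an at most countable
ω-categorical structure which is a model-complete core, and let `SB` be obtained from
`SA` by adding a singleton unary relation `{s₀}`. Then `SB` is homomorphically
equivalent to a pp-power of `SA`. -/
theorem stmt7 {σ : Type} {ar : σ → ℕ} {D : Type} [Countable D]
    (SA : RelStruct σ ar D) (hcat : OmegaCategorical SA) (hmc : ModelCompleteCore SA)
    (s₀ : D) :
    HomEqPpPower SA (addSingletons SA (fun _ : Fin 1 => s₀)) :=
  have : Nonempty D := ⟨s₀⟩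
  homEqPpPower_addSingletons_of_ppDefinable_autOrbit (hcat.ppDefinable_autOrbit hmc _)
end

section
/- Let 𝒜 and ℬ be function clones. Then ℬ ∈ E Ret P 𝒜 if and only if there exists a strong h1 clone homomorphism from 𝒜 to ℬ. Moreover, if the domains A and B are finite, then P may equivalently be replaced by Pfin. -/
section Stmt11Aux

variable {A B : Type}

/-- Key well-definedness lemma: if two "term operations applied to tuples over `B`"
agree as functions of the valuation `φ : B → A`, then an h1-identity-preserving map
gives them the same value. -/
lemma stmt11_key (CA : OpSet A) (ξ : CloneMap A B) (hh1 : PreservesH1 CA ξ)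
    {n m : ℕ} {f : (Fin (n+1) → A) → A} {g : (Fin (m+1) → A) → A}
    (hf : f ∈ CA n) (hg : g ∈ CA m)
    (u : Fin (n+1) → B) (v : Fin (m+1) → B)
    (heq : ∀ φ : B → A, f (fun i => φ (u i)) = g (fun i => φ (v i))) :
    ξ n f u = ξ m g v := by
  classical
  -- combine the tuples `u` and `v` into one tuple `w`
  set K := n + m + 1 with hK
  have hn : ∀ i : Fin (n+1), (i : ℕ) < K + 1 := fun i => by omega
  have hm : ∀ i : Fin (m+1), n + 1 + (i : ℕ) < K + 1 := fun i => by omega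
  let w : Fin (K+1) → B := fun k =>
    if h : (k : ℕ) < n + 1 then u ⟨k, h⟩ else v ⟨(k : ℕ) - (n+1), by omega⟩
  let idx : B → Fin (K+1) := fun b =>
    if h : ∃ j, w j = b then h.choose else ⟨0, by omega⟩
  have idx_spec : ∀ b : B, (∃ j, w j = b) → w (idx b) = b := by
    intro b hb
    simp only [idx, dif_pos hb]
    exact hb.choose_spec
  have hwu : ∀ i : Fin (n+1), w (idx (u i)) = u i := by
    intro i
    refine idx_spec _ ⟨⟨(i : ℕ), hn i⟩, ?_⟩
    simp only [w, dif_pos i.isLt]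
  have hwv : ∀ i : Fin (m+1), w (idx (v i)) = v i := by
    intro i
    refine idx_spec _ ⟨⟨n + 1 + (i : ℕ), hm i⟩, ?_⟩
    have h1 : ¬ (n + 1 + (i : ℕ) < n + 1) := by omega
    simp only [w, dif_neg h1]
    congr 1
    ext
    simp
  let p : Fin (n+1) → Fin (K+1) := fun i => idx (u i)
  let q : Fin (m+1) → Fin (K+1) := fun i => idx (v i)
  have hminor : (fun t : Fin (K+1) → A => f (fun i => t (p i)))
      = (fun t : Fin (K+1) → A => g (fun i => t (q i))) := by
    funext t
    have := heq (fun b => t (idx b))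
    simpa using this
  have h1f := hh1 n K f hf p
  have h1g := hh1 m K g hg q
  have : (fun t : Fin (K+1) → B => ξ n f (fun i => t (p i)))
      = (fun t : Fin (K+1) → B => ξ m g (fun i => t (q i))) := by
    rw [← h1f, ← h1g, hminor]
  have hw := congrFun this w
  have hu : (fun i => w (p i)) = u := funext fun i => hwu i
  have hv : (fun i => w (q i)) = v := funext fun i => hwv i
  rw [hu, hv] at hw
  exact hw

/-- The witness predicate: `x : (B → A) → A` arises from an operation of `CA`
applied to a tuple of evaluation maps. -/
def Wit (CA : OpSet A) (x : (B → A) → A) : Prop :=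
  ∃ c : (n : ℕ) × (((Fin (n+1) → A) → A) × (Fin (n+1) → B)),
    c.2.1 ∈ CA c.1 ∧ x = fun φ => c.2.1 (fun i => φ (c.2.2 i))

open Classical in
/-- The retraction map `h2 : A^(A^B) → B` induced by a strong h1 clone homomorphism. -/
noncomputable def H2 [Nonempty B] (CA : OpSet A) (ξ : CloneMap A B)
    (x : (B → A) → A) : B :=
  if h : Wit CA x then ξ h.choose.1 h.choose.2.1 h.choose.2.2 else Classical.arbitrary B

lemma H2_spec [Nonempty B] (CA : OpSet A) (ξ : CloneMap A B) (hh1 : PreservesH1 CA ξ)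
    {n : ℕ} {f : (Fin (n+1) → A) → A} (hf : f ∈ CA n) (u : Fin (n+1) → B) :
    H2 CA ξ (fun φ => f (fun i => φ (u i))) = ξ n f u := by
  have hW : Wit CA (fun φ : B → A => f (fun i => φ (u i))) := ⟨⟨n, f, u⟩, hf, rfl⟩
  rw [H2, dif_pos hW]
  obtain ⟨hc1, hc2⟩ := hW.choose_spec
  refine stmt11_key CA ξ hh1 hc1 hf _ u fun φ => ?_
  exact (congrFun hc2 φ).symm

/-- From a strong h1 clone homomorphism, build a retraction of the power `A^(A^B)`. -/
lemma stmt11_strong_to_ret [Nonempty B] (CA : OpSet A) (CB : OpSet B) (hA : IsClone CA)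
    {ξ : CloneMap A B} (hξ : IsStrongH1Hom CA CB ξ) :
    ∃ (h1 : B → ((B → A) → A)) (h2 : ((B → A) → A) → B),
      (∀ b, h2 (h1 b) = b) ∧
      ∀ n f, f ∈ CA n →
        (fun uu : Fin (n+1) → B => h2 (fun j => f (fun i => h1 (uu i) j))) ∈ CB n := by
  obtain ⟨⟨hmaps, hh1⟩, hproj⟩ := hξ
  refine ⟨fun b φ => φ b, H2 CA ξ, ?_, ?_⟩
  · intro b
    have h0 : (fun t : Fin 1 → A => t 0) ∈ CA 0 := hA.proj 0 0
    have := H2_spec CA ξ hh1 h0 (fun _ => b)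
    have hp := congrFun (hproj 0 0) (fun _ : Fin 1 => b)
    calc H2 CA ξ (fun φ => φ b) = ξ 0 (fun t => t 0) (fun _ => b) := this
      _ = b := hp
  · intro n f hf
    have : (fun uu : Fin (n+1) → B =>
        H2 CA ξ (fun φ => f (fun i => φ (uu i)))) = ξ n f := by
      funext uu
      exact H2_spec CA ξ hh1 hf uu
    have hmem := hmaps n f hf
    exact this ▸ hmem

/-- Any retraction of a power yields a strong h1 clone homomorphism. -/
lemma stmt11_ret_to_strong {I : Type} (CA : OpSet A) (CB : OpSet B)
    (h1 : B → (I → A)) (h2 : (I → A) → B) (hret : ∀ b, h2 (h1 b) = b)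
    (hc : ∀ n f, f ∈ CA n →
      (fun u : Fin (n+1) → B => h2 (fun j => f (fun i => h1 (u i) j))) ∈ CB n) :
    ∃ ξ, IsStrongH1Hom CA CB ξ := by
  refine ⟨fun n f u => h2 (fun j => f (fun i => h1 (u i) j)), ⟨⟨hc, ?_⟩, ?_⟩⟩
  · intro n m f hf p
    rfl
  · intro n i
    funext u
    exact hret (u i)

end Stmt11Aux

/-- Proposition 5.3 (ii) of the paper. Let `CA`, `CB` be function
clones. Then `CB ∈ E Ret P CA` iff there exists a strong h1 clone homomorphism from
`CA` to `CB`; moreover, if the domains are finite, `P` may equivalently be replaced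
by `Pfin`. -/
theorem stmt11 {A B : Type} [Nonempty A] [Nonempty B] (CA : OpSet A) (CB : OpSet B)
    (hA : IsClone CA) (hB : IsClone CB) :
    (InERetP CA CB ↔ ∃ ξ, IsStrongH1Hom CA CB ξ) ∧
    (Finite A → Finite B → (InERetPfin CA CB ↔ ∃ ξ, IsStrongH1Hom CA CB ξ)) := by
  constructor
  · constructor
    · rintro ⟨I, h1, h2, hret, hc⟩
      exact stmt11_ret_to_strong CA CB h1 h2 hret hc
    · rintro ⟨ξ, hξ⟩
      obtain ⟨h1, h2, hret, hc⟩ := stmt11_strong_to_ret CA CB hA hξ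
      exact ⟨(B → A), h1, h2, hret, hc⟩
  · intro _ hBfin
    constructor
    · rintro ⟨m, h1, h2, hret, hc⟩
      exact stmt11_ret_to_strong CA CB h1 h2 hret hc
    · rintro ⟨ξ, hξ⟩
      obtain ⟨h1, h2, hret, hc⟩ := stmt11_strong_to_ret CA CB hA hξ
      have : Finite (B → A) := Pi.finite
      obtain ⟨m, ⟨e⟩⟩ := Finite.exists_equiv_fin (B → A)
      refine ⟨m, fun b j => h1 b (e.symm j), fun x => h2 (fun φ => x (e φ)), ?_, ?_⟩
      · intro b
        show h2 (fun φ => h1 b (e.symm (e φ))) = b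
        have : (fun φ => h1 b (e.symm (e φ))) = h1 b := by
          funext φ; rw [e.symm_apply_apply]
        rw [this]; exact hret b
      · intro n f hf
        have heq : (fun u : Fin (n+1) → B =>
            h2 (fun φ => f (fun i => h1 (u i) (e.symm (e φ)))))
            = (fun u : Fin (n+1) → B => h2 (fun j => f (fun i => h1 (u i) j))) := by
          funext u
          congr 1
          funext φ
          rw [e.symm_apply_apply]
        show (fun u : Fin (n+1) → B =>
            h2 (fun φ => f (fun i => h1 (u i) (e.symm (e φ))))) ∈ CB n
        exact heq ▸ hc n f hf
end

section
/- Let 𝒜 and ℬ be function clones. Then ℬ ∈ E Tra P 𝒜 if and only if there exists an h1 clone homomorphism from 𝒜 to ℬ. Moreover, if the domains A and B are finite, then P may equivalently be replaced by Pfin. -/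
section Aux

variable {A B : Type} [Nonempty A] [Nonempty B] {CA : OpSet A} {CB : OpSet B}

/-- Key well-definedness lemma: if two minors of clone members agree as `B`-ary
operations, then the corresponding `ξ`-images agree. -/
lemma key_wd (hA : IsClone CA) {ξ : CloneMap A B} (hξ : IsH1Hom CA CB ξ)
    {n m : ℕ} {f : (Fin (n+1) → A) → A} {g : (Fin (m+1) → A) → A}
    {u : Fin (n+1) → B} {v : Fin (m+1) → B}
    (hf : f ∈ CA n) (hg : g ∈ CA m)
    (h : ∀ α : B → A, f (fun i => α (u i)) = g (fun i => α (v i))) :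
    ξ n f u = ξ m g v := by
  set k := n + m + 1 with hk
  set e0 : Fin (k+1) → B := fun j =>
    if h : (j : ℕ) < n+1 then u ⟨j, h⟩ else v ⟨(j : ℕ) - (n+1), by omega⟩ with he0
  set p' : Fin (n+1) → Fin (k+1) := fun i => ⟨i, by omega⟩ with hp'
  set q' : Fin (m+1) → Fin (k+1) := fun i => ⟨n+1+i, by omega⟩ with hq'
  have hu : ∀ i, e0 (p' i) = u i := by
    intro i
    simp only [he0, hp']
    rw [dif_pos i.isLt]
  have hv : ∀ i, e0 (q' i) = v i := by
    intro i
    have hnot : ¬ ((n+1+(i : ℕ)) < n+1) := by omega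
    simp only [he0, hq']
    rw [dif_neg hnot]
    congr 1
    exact Fin.ext (by simp)
  set ρ : Fin (k+1) → Fin (k+1) := fun j => Function.invFun e0 (e0 j) with hρdef
  have hρ : ∀ j, e0 (ρ j) = e0 j := fun j => Function.invFun_eq ⟨j, rfl⟩
  set f' : (Fin (k+1) → A) → A := fun t => f (fun i => t (ρ (p' i))) with hf'
  set g' : (Fin (k+1) → A) → A := fun t => g (fun i => t (ρ (q' i))) with hg'
  have hfg : f' = g' := by
    funext t
    set α : B → A := fun b => t (Function.invFun e0 b) with hα
    have h1 : f' t = f (fun i => α (e0 (p' i))) := rfl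
    have h2 : g' t = g (fun i => α (e0 (q' i))) := rfl
    rw [h1, h2]
    calc f (fun i => α (e0 (p' i))) = f (fun i => α (u i)) := by
          congr 1; funext i; rw [hu i]
      _ = g (fun i => α (v i)) := h α
      _ = g (fun i => α (e0 (q' i))) := by congr 1; funext i; rw [hv i]
  have hh1f := hξ.2 n k f hf (fun i => ρ (p' i))
  have hh1g := hξ.2 m k g hg (fun i => ρ (q' i))
  have hfe : ξ n f u = ξ k f' e0 := by
    have := congrFun hh1f e0
    rw [hf']
    rw [this]
    congr 1
    funext i
    rw [hρ (p' i), hu i]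
  have hge : ξ m g v = ξ k g' e0 := by
    have := congrFun hh1g e0
    rw [hg']
    rw [this]
    congr 1
    funext i
    rw [hρ (q' i), hv i]
  rw [hfe, hge, hfg]

/-- From an h1 homomorphism, construct the reflection data with index set `B → A`. -/
lemma construct_of_h1 (hA : IsClone CA) (hξe : ∃ ξ, IsH1Hom CA CB ξ) :
    ∃ (h1 : B → ((B → A) → A)) (h2 : ((B → A) → A) → B),
      ∀ n f, f ∈ CA n →
        (fun u : Fin (n+1) → B => h2 (fun j => f (fun i => h1 (u i) j))) ∈ CB n := by
  obtain ⟨ξ, hξ⟩ := hξe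
  have hwd : ∀ w : (B → A) → A, ∃ b : B, ∀ (n : ℕ) (f : (Fin (n+1) → A) → A)
      (u : Fin (n+1) → B), f ∈ CA n →
      (w = fun α => f (fun i => α (u i))) → b = ξ n f u := by
    intro w
    by_cases hw : ∃ n : ℕ, ∃ f, f ∈ CA n ∧ ∃ u : Fin (n+1) → B,
        w = fun α => f (fun i => α (u i))
    · obtain ⟨n0, f0, hf0, u0, hw0⟩ := hw
      exact ⟨ξ n0 f0 u0, fun n f u hf he =>
        key_wd hA hξ hf0 hf fun α => congrFun (hw0.symm.trans he) α⟩
    · exact ⟨Classical.arbitrary B, fun n f u hf he =>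
        absurd ⟨n, f, hf, u, he⟩ hw⟩
  refine ⟨fun b α => α b, fun w => Classical.choose (hwd w), fun n f hf => ?_⟩
  have heq : (fun u : Fin (n+1) → B =>
      Classical.choose (hwd (fun j => f (fun i => (fun b (α : B → A) => α b) (u i) j))))
      = ξ n f := by
    funext u
    exact Classical.choose_spec (hwd _) n f u hf rfl
  rw [heq]
  exact hξ.1 n f hf

/-- InETraP implies the existence of an h1 homomorphism. -/
lemma h1_of_etrap (h : InETraP CA CB) : ∃ ξ, IsH1Hom CA CB ξ := by
  obtain ⟨I, h1, h2, hmem⟩ := h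
  refine ⟨fun n f u => h2 (fun j => f (fun i => h1 (u i) j)), ?_, ?_⟩
  · exact fun n f hf => hmem n f hf
  · intro n m f hf p
    rfl

end Aux

/-- Proposition 5.3 (iii) of the paper. Let `CA`, `CB` be function
clones. Then `CB ∈ E Tra P CA` iff there exists an h1 clone homomorphism from `CA` to
`CB`; moreover, if the domains are finite, `P` may equivalently be replaced by `Pfin`. -/
theorem stmt12 {A B : Type} [Nonempty A] [Nonempty B] (CA : OpSet A) (CB : OpSet B)
    (hA : IsClone CA) (hB : IsClone CB) :
    (InETraP CA CB ↔ ∃ ξ, IsH1Hom CA CB ξ) ∧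
    (Finite A → Finite B → (InETraPfin CA CB ↔ ∃ ξ, IsH1Hom CA CB ξ)) := by
  constructor
  · constructor
    · exact h1_of_etrap
    · intro hξe
      obtain ⟨h1, h2, hmem⟩ := construct_of_h1 hA hξe
      exact ⟨(B → A), h1, h2, hmem⟩
  · intro _ _
    constructor
    · intro h
      obtain ⟨m, h1, h2, hmem⟩ := h
      exact h1_of_etrap ⟨Fin m, h1, h2, hmem⟩
    · intro hξe
      obtain ⟨h1, h2, hmem⟩ := construct_of_h1 hA hξe
      have : Fintype (B → A) := Fintype.ofFinite _
      set m := Fintype.card (B → A) with hm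
      set e : (B → A) ≃ Fin m := Fintype.equivFin (B → A) with he
      refine ⟨m, fun b j => h1 b (e.symm j), fun w => h2 (fun α => w (e α)), ?_⟩
      intro n f hf
      have heq : (fun u : Fin (n+1) → B =>
          h2 (fun α => f (fun i => h1 (u i) (e.symm (e α)))))
          = fun u : Fin (n+1) → B => h2 (fun j => f (fun i => h1 (u i) j)) := by
        funext u
        congr 1
        funext α
        rw [e.symm_apply_apply]
      exact heq ▸ hmem n f hf
end
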